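/- arXiv:1601.03241 — 6 statements merged into one kernel-verified Lean document; each statement's English description precedes it below -/
import Mathlib

section
/- Let G be a connected graph and let H be a connected spanning subgraph of G. Then tmc(G) ≥ e(G) − e(H) + tmc(H), where e(G) and e(H) denote the number of edges of G and H respectively. -/
open SimpleGraph

/-- A walk is a *total monochromatic path* (w.r.t. a vertex coloring `vcol` and an
edge coloring `ecol`) if it is a path and all its edges and internal vertices
share one common color. -/
def IsTMCPath {V : Type*} (G : SimpleGraph V) (vcol : V → ℕ) (ecol : Sym2 V → ℕ)
    {u v : V} (p : G.Walk u v) : Prop :=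
  p.IsPath ∧ ∃ c : ℕ, (∀ e ∈ p.edges, ecol e = c) ∧
    ∀ w ∈ p.support, w ≠ u → w ≠ v → vcol w = c

/-- A total coloring (vertex coloring `vcol` together with edge coloring `ecol`) is a
*TMC-coloring* if any two vertices are connected by a total monochromatic path. -/
def IsTMCColoring {V : Type*} (G : SimpleGraph V) (vcol : V → ℕ) (ecol : Sym2 V → ℕ) : Prop :=
  ∀ u v : V, ∃ p : G.Walk u v, IsTMCPath G vcol ecol p

/-- The number of colors used by a total coloring: colors on vertices together with
colors on (actual) edges of `G`. -/
noncomputable def totalColorsUsed {V : Type*} (G : SimpleGraph V)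
    (vcol : V → ℕ) (ecol : Sym2 V → ℕ) : ℕ :=
  (Set.range vcol ∪ ecol '' G.edgeSet).ncard

/-- The total monochromatic connection number `tmc G`: the maximum number of colors
used in a TMC-coloring of `G`. -/
noncomputable def tmc {V : Type*} (G : SimpleGraph V) : ℕ :=
  sSup { k | ∃ vcol ecol, IsTMCColoring G vcol ecol ∧ totalColorsUsed G vcol ecol = k }

/-- An edge coloring is an *MC-coloring* if any two vertices are connected by a
monochromatic path (all edges of one color). -/
def IsMCColoring {V : Type*} (G : SimpleGraph V) (ecol : Sym2 V → ℕ) : Prop :=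
  ∀ u v : V, ∃ p : G.Walk u v, p.IsPath ∧ ∃ c : ℕ, ∀ e ∈ p.edges, ecol e = c

/-- The monochromatic connection number `mc G`. -/
noncomputable def mc {V : Type*} (G : SimpleGraph V) : ℕ :=
  sSup { k | ∃ ecol : Sym2 V → ℕ, IsMCColoring G ecol ∧ (ecol '' G.edgeSet).ncard = k }

/-- A vertex coloring is an *MVC-coloring* if any two vertices are connected by a
vertex-monochromatic path (all internal vertices of one color). -/
def IsMVCColoring {V : Type*} (G : SimpleGraph V) (vcol : V → ℕ) : Prop :=
  ∀ u v : V, ∃ p : G.Walk u v, p.IsPath ∧ ∃ c : ℕ,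
    ∀ w ∈ p.support, w ≠ u → w ≠ v → vcol w = c

/-- The monochromatic vertex connection number `mvc G`. -/
noncomputable def mvc {V : Type*} (G : SimpleGraph V) : ℕ :=
  sSup { k | ∃ vcol : V → ℕ, IsMVCColoring G vcol ∧ (Set.range vcol).ncard = k }

/-- The number of leaves (vertices of degree one) of a graph. -/
noncomputable def leafCount {V : Type*} (G : SimpleGraph V) : ℕ :=
  {v : V | (G.neighborSet v).ncard = 1}.ncard

/-- `maxLeaves G = l(G)`: the maximum number of leaves over all spanning trees of `G`. -/
noncomputable def maxLeaves {V : Type*} (G : SimpleGraph V) : ℕ :=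
  sSup { k | ∃ T : SimpleGraph V, T ≤ G ∧ T.IsTree ∧ leafCount T = k }

/-!
Take a TMC-coloring of `H` with `tmc H` colors and give each edge of `G` outside `H` its own
new color. The total monochromatic paths of `H` are still such paths in `G`, so this is a
TMC-coloring of `G` with `tmc H + (e(G) - e(H))` colors.
-/

open Set

section

variable {V : Type*}

theorem IsTMCColoring.of_connected {G : SimpleGraph V} (hG : G.Connected) (c : ℕ) :
    IsTMCColoring G (fun _ => c) (fun _ => c) := by
  classical
  intro u v
  let p := (hG.preconnected u v).some.toPath
  exact ⟨p.1, p.2, c, fun _ _ => rfl, fun _ _ _ _ => rfl⟩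

theorem IsTMCColoring.mono {G H : SimpleGraph V} (hle : H ≤ G) {vcol : V → ℕ}
    {ecol ecol' : Sym2 V → ℕ} (h : IsTMCColoring H vcol ecol) (heq : EqOn ecol' ecol H.edgeSet) :
    IsTMCColoring G vcol ecol' := by
  intro u v
  obtain ⟨p, hp, c, hce, hcv⟩ := h u v
  have hpG : ∀ e ∈ p.edges, e ∈ G.edgeSet := fun e he =>
    edgeSet_mono hle (p.edges_subset_edgeSet he)
  refine ⟨p.transfer G hpG, hp.transfer hpG, c, fun e he => ?_, fun w hw => ?_⟩
  · rw [Walk.edges_transfer] at he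
    rw [heq (p.edges_subset_edgeSet he), hce e he]
  · rw [Walk.support_transfer] at hw
    exact hcv w hw

theorem totalColorsUsed_le_card_add_ncard_edgeSet [Finite V] (G : SimpleGraph V)
    (vcol : V → ℕ) (ecol : Sym2 V → ℕ) :
    totalColorsUsed G vcol ecol ≤ Nat.card V + G.edgeSet.ncard :=
  calc totalColorsUsed G vcol ecol
      ≤ (range vcol).ncard + (ecol '' G.edgeSet).ncard := ncard_union_le _ _
    _ ≤ Nat.card V + G.edgeSet.ncard := by
      gcongr
      · rw [← image_univ, ← ncard_univ]
        exact ncard_image_le finite_univ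
      · exact ncard_image_le G.edgeSet.toFinite

theorem bddAbove_tmc_set [Finite V] (G : SimpleGraph V) :
    BddAbove {k | ∃ vcol ecol, IsTMCColoring G vcol ecol ∧ totalColorsUsed G vcol ecol = k} :=
  ⟨Nat.card V + G.edgeSet.ncard, by
    rintro k ⟨vcol, ecol, -, rfl⟩
    exact totalColorsUsed_le_card_add_ncard_edgeSet G vcol ecol⟩

theorem IsTMCColoring.totalColorsUsed_le_tmc [Finite V] {G : SimpleGraph V} {vcol : V → ℕ}
    {ecol : Sym2 V → ℕ} (h : IsTMCColoring G vcol ecol) : totalColorsUsed G vcol ecol ≤ tmc G :=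
  le_csSup (bddAbove_tmc_set G) ⟨vcol, ecol, h, rfl⟩

theorem exists_isTMCColoring_totalColorsUsed_eq_tmc [Finite V] {G : SimpleGraph V}
    (hG : G.Connected) :
    ∃ vcol ecol, IsTMCColoring G vcol ecol ∧ totalColorsUsed G vcol ecol = tmc G :=
  show tmc G ∈ _ from
    Nat.sSup_mem ⟨_, fun _ => 0, fun _ => 0, .of_connected hG 0, rfl⟩ (bddAbove_tmc_set G)

theorem exists_eqOn_injOn_compl_disjoint {α : Type*} [Countable α] (f : α → ℕ) (s : Set α)
    {U : Set ℕ} (hU : U.Finite) :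
    ∃ f' : α → ℕ, EqOn f' f s ∧ InjOn f' sᶜ ∧ Disjoint U (f' '' sᶜ) := by
  classical
  obtain ⟨b, hb⟩ := hU.bddAbove
  obtain ⟨g, hg⟩ := exists_injective_nat α
  refine ⟨s.piecewise f (fun a => b + 1 + g a), s.piecewise_eqOn _ _, ?_, ?_⟩
  · intro x hx y hy hxy
    rw [piecewise_eq_of_notMem _ _ _ hx, piecewise_eq_of_notMem _ _ _ hy] at hxy
    exact hg (by omega)
  · rw [disjoint_right]
    rintro _ ⟨a, ha, rfl⟩ hmem
    have := hb hmem
    rw [piecewise_eq_of_notMem _ _ _ ha] at this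
    omega

theorem totalColorsUsed_eq_add_ncard_diff [Finite V] {G H : SimpleGraph V} (hle : H ≤ G)
    (vcol : V → ℕ) {ecol ecol' : Sym2 V → ℕ} (heq : EqOn ecol' ecol H.edgeSet)
    (hinj : InjOn ecol' H.edgeSetᶜ)
    (hdisj : Disjoint (range vcol ∪ ecol '' H.edgeSet) (ecol' '' H.edgeSetᶜ)) :
    totalColorsUsed G vcol ecol' =
      totalColorsUsed H vcol ecol + (G.edgeSet \ H.edgeSet).ncard := by
  have hdiff : G.edgeSet \ H.edgeSet ⊆ H.edgeSetᶜ := sdiff_subset_compl _ _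
  have hsplit : ecol' '' G.edgeSet = ecol '' H.edgeSet ∪ ecol' '' (G.edgeSet \ H.edgeSet) := by
    rw [← union_sdiff_cancel (edgeSet_mono hle), image_union, heq.image_eq,
      union_sdiff_cancel (edgeSet_mono hle)]
  rw [totalColorsUsed, totalColorsUsed, hsplit, ← union_assoc,
    ncard_union_eq (hdisj.mono_right (image_mono hdiff)) (toFinite _) (toFinite _),
    (hinj.mono hdiff).ncard_image]

end

theorem stmt_0_general {V : Type*} [Fintype V] (G H : SimpleGraph V)
    (hH : H.Connected) (hle : H ≤ G) :
    G.edgeSet.ncard - H.edgeSet.ncard + tmc H ≤ tmc G := by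
  obtain ⟨vcol, ecol, hcol, hcard⟩ := exists_isTMCColoring_totalColorsUsed_eq_tmc hH
  obtain ⟨ecol', heq, hinj, hdisj⟩ :=
    exists_eqOn_injOn_compl_disjoint ecol H.edgeSet (toFinite (range vcol ∪ ecol '' H.edgeSet))
  have hle_tmc := (hcol.mono hle heq).totalColorsUsed_le_tmc
  rw [totalColorsUsed_eq_add_ncard_diff hle vcol heq hinj hdisj, hcard,
    ncard_sdiff (edgeSet_mono hle)] at hle_tmc
  omega

/-- If `G` is a connected graph and `H` is a connected spanning subgraph of `G`,
then `tmc(G) ≥ e(G) - e(H) + tmc(H)`. -/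
theorem stmt_0 {V : Type*} [Fintype V] (G H : SimpleGraph V)
    (hG : G.Connected) (hH : H.Connected) (hle : H ≤ G) :
    G.edgeSet.ncard - H.edgeSet.ncard + tmc H ≤ tmc G :=
  stmt_0_general G H hH hle
end

section
/- If T is a tree, then tmc(T) = l(T) + 1, where l(T) is the number of leaves (vertices of degree one) of T. -/
open SimpleGraph

/-!
In a TMC-colouring of a tree, the only path between two neighbours `a ≠ b` of a vertex `v` is
`a v b`, so the edges `va`, `vb` and the vertex `v` share one colour. Along walks this forces all
edges to have one colour, and every vertex with at least two neighbours to have it too: only the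
leaves are free, so at most `l(T) + 1` colours occur. Conversely, colouring every edge and every
non-leaf `0` and the leaves with distinct positive colours is a TMC-colouring, because a leaf is
never an interior vertex of a path.
-/

namespace SimpleGraph

variable {V : Type*} {G : SimpleGraph V}

def leafSet (G : SimpleGraph V) : Set V :=
  {v | (G.neighborSet v).ncard = 1}

lemma leafCount_eq_ncard_leafSet : leafCount G = G.leafSet.ncard := rfl

lemma notMem_leafSet_of_adj_of_adj {v a b : V} (ha : G.Adj v a) (hb : G.Adj v b) (hab : a ≠ b) :
    v ∉ G.leafSet := by
  intro hv
  obtain ⟨t, ht⟩ := Set.ncard_eq_one.mp hv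
  have ha' : a ∈ G.neighborSet v := ha
  have hb' : b ∈ G.neighborSet v := hb
  rw [ht, Set.mem_singleton_iff] at ha' hb'
  exact hab (ha'.trans hb'.symm)

lemma Preconnected.exists_adj_adj_of_notMem_leafSet [Finite V] [Nontrivial V]
    (hG : G.Preconnected) {v : V} (hv : v ∉ G.leafSet) :
    ∃ a b, a ≠ b ∧ G.Adj v a ∧ G.Adj v b := by
  have hpos : 0 < (G.neighborSet v).ncard :=
    (Set.ncard_pos).mpr (hG.exists_adj_of_nontrivial v)
  have hv' : (G.neighborSet v).ncard ≠ 1 := hv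
  obtain ⟨a, ha, b, hb, hab⟩ :=
    (Set.one_lt_ncard (s := G.neighborSet v) (Set.toFinite _)).mp (by omega)
  exact ⟨a, b, hab, ha, hb⟩

lemma Walk.IsPath.exists_adj_adj_of_mem_support {u v : V} {p : G.Walk u v} (hp : p.IsPath)
    {w : V} (hw : w ∈ p.support) (hwu : w ≠ u) (hwv : w ≠ v) :
    ∃ a b, a ≠ b ∧ G.Adj w a ∧ G.Adj w b := by
  induction p with
  | nil => exact absurd (List.mem_singleton.mp hw) hwu
  | @cons u x v hux q ih =>
    rw [Walk.cons_isPath_iff] at hp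
    rcases List.mem_cons.mp hw with rfl | hw
    · exact absurd rfl hwu
    obtain rfl | hwx := eq_or_ne w x
    · cases q with
      | nil => exact absurd rfl hwv
      | @cons _ y _ hwy _ =>
        exact ⟨u, y, by rintro rfl; exact hp.2 (by simp), hux.symm, hwy⟩
    · exact ih hp.1 hw hwx hwv

lemma Preconnected.apply_eq_of_forall_adj_adj {α : Type*} {f : Sym2 V → α} (hG : G.Preconnected)
    (hf : ∀ v a b, G.Adj v a → G.Adj v b → f s(v, a) = f s(v, b))
    {x y z w : V} (hxy : G.Adj x y) (hzw : G.Adj z w) : f s(z, w) = f s(x, y) := by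
  obtain ⟨p⟩ := hG z x
  induction p generalizing w with
  | nil => exact hf _ _ _ hzw hxy
  | cons hut _ ih => rw [hf _ _ _ hzw hut, Sym2.eq_swap]; exact ih hxy hut.symm

end SimpleGraph

open SimpleGraph

section UpperBound

variable {V : Type*} {G : SimpleGraph V} {vcol : V → ℕ} {ecol : Sym2 V → ℕ}

lemma IsTMCColoring.isTMCPath_of_isPath (hG : G.IsAcyclic) (h : IsTMCColoring G vcol ecol)
    {u v : V} {p : G.Walk u v} (hp : p.IsPath) : IsTMCPath G vcol ecol p := by
  obtain ⟨q, hq⟩ := h u v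
  obtain rfl : p = q :=
    congrArg Subtype.val ((hG.subsingleton_path u v).elim ⟨p, hp⟩ ⟨q, hq.1⟩)
  exact hq

lemma IsTMCColoring.ecol_eq_and_vcol_eq_of_adj_of_adj (hG : G.IsAcyclic)
    (h : IsTMCColoring G vcol ecol)
    {v a b : V} (ha : G.Adj v a) (hb : G.Adj v b) (hab : a ≠ b) :
    ecol s(v, a) = ecol s(v, b) ∧ vcol v = ecol s(v, a) := by
  have hp : (Walk.cons ha.symm (Walk.cons hb Walk.nil)).IsPath := by
    simp [Walk.cons_isPath_iff, hab, ha.ne', hb.ne]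
  obtain ⟨-, c, hce, hcv⟩ := h.isTMCPath_of_isPath hG hp
  have hva : ecol s(v, a) = c := by rw [Sym2.eq_swap]; exact hce _ (by simp)
  exact ⟨hva.trans (hce _ (by simp)).symm, (hcv v (by simp) ha.ne hb.ne).trans hva.symm⟩

lemma IsTMCColoring.ecol_eq_of_adj_of_adj (hG : G.IsAcyclic) (h : IsTMCColoring G vcol ecol)
    {v a b : V} (ha : G.Adj v a) (hb : G.Adj v b) : ecol s(v, a) = ecol s(v, b) := by
  obtain rfl | hab := eq_or_ne a b
  · rfl
  · exact (h.ecol_eq_and_vcol_eq_of_adj_of_adj hG ha hb hab).1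

lemma IsTMCColoring.ecol_eq_of_adj (hG : G.IsTree) (h : IsTMCColoring G vcol ecol)
    {x y z w : V} (hxy : G.Adj x y) (hzw : G.Adj z w) : ecol s(z, w) = ecol s(x, y) :=
  hG.connected.preconnected.apply_eq_of_forall_adj_adj
    (fun _ _ _ => h.ecol_eq_of_adj_of_adj hG.isAcyclic) hxy hzw

lemma IsTMCColoring.totalColorsUsed_le [Finite V] (hG : G.IsTree)
    (h : IsTMCColoring G vcol ecol) :
    totalColorsUsed G vcol ecol ≤ leafCount G + 1 := by
  obtain ⟨c, hc⟩ : ∃ c, Set.range vcol ∪ ecol '' G.edgeSet ⊆ insert c (vcol '' G.leafSet) := by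
    rcases subsingleton_or_nontrivial V with hV | hV
    · obtain ⟨v₀⟩ := hG.connected.nonempty
      refine ⟨vcol v₀, ?_⟩
      rintro _ (⟨v, rfl⟩ | ⟨e, he, -⟩)
      · exact Subsingleton.elim v v₀ ▸ Set.mem_insert _ _
      · induction e with
        | h a b => exact absurd (Subsingleton.elim a b) (G.mem_edgeSet.mp he).ne
    obtain ⟨x⟩ := hG.connected.nonempty
    obtain ⟨y, hxy⟩ := hG.connected.preconnected.exists_adj_of_nontrivial x
    refine ⟨ecol s(x, y), ?_⟩
    rintro _ (⟨v, rfl⟩ | ⟨e, he, rfl⟩)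
    · by_cases hv : v ∈ G.leafSet
      · exact Set.mem_insert_of_mem _ ⟨v, hv, rfl⟩
      obtain ⟨a, b, hab, ha, hb⟩ :=
        hG.connected.preconnected.exists_adj_adj_of_notMem_leafSet hv
      rw [(h.ecol_eq_and_vcol_eq_of_adj_of_adj hG.isAcyclic ha hb hab).2,
        h.ecol_eq_of_adj hG hxy ha]
      exact Set.mem_insert _ _
    · induction e with
      | h z w => rw [h.ecol_eq_of_adj hG hxy he]; exact Set.mem_insert _ _
  calc totalColorsUsed G vcol ecol ≤ (insert c (vcol '' G.leafSet)).ncard :=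
        Set.ncard_le_ncard hc
    _ ≤ (vcol '' G.leafSet).ncard + 1 := Set.ncard_insert_le _ _
    _ ≤ leafCount G + 1 := Nat.add_le_add_right (Set.ncard_image_le (Set.toFinite _)) 1

end UpperBound

section LowerBound

variable {V : Type*} {G : SimpleGraph V}

lemma isTMCColoring_const_of_eqOn_compl_leafSet (hG : G.Preconnected) {vcol : V → ℕ} {c : ℕ}
    (hvcol : ∀ v ∉ G.leafSet, vcol v = c) : IsTMCColoring G vcol (fun _ => c) := by
  classical
  intro u v
  let p := (hG u v).some.toPath
  refine ⟨p, p.isPath, c, fun _ _ => rfl, fun w hw hwu hwv => hvcol w ?_⟩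
  obtain ⟨a, b, hab, ha, hb⟩ := p.isPath.exists_adj_adj_of_mem_support hw hwu hwv
  exact notMem_leafSet_of_adj_of_adj ha hb hab

lemma exists_isTMCColoring_totalColorsUsed_eq [Finite V] (hG : G.Connected) :
    ∃ vcol ecol, IsTMCColoring G vcol ecol ∧ totalColorsUsed G vcol ecol = leafCount G + 1 := by
  obtain ⟨f, hf⟩ := Countable.exists_injective_nat V
  let vcol := G.leafSet.indicator fun v => f v + 1
  refine ⟨vcol, fun _ => 0, isTMCColoring_const_of_eqOn_compl_leafSet hG.preconnected
    fun v hv => Set.indicator_of_notMem hv _, ?_⟩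
  have hcolors : Set.range vcol ∪ (fun _ => 0) '' G.edgeSet =
      insert 0 ((fun v => f v + 1) '' G.leafSet) := by
    apply Set.Subset.antisymm
    · rintro _ (⟨v, rfl⟩ | ⟨e, -, rfl⟩)
      · by_cases hv : v ∈ G.leafSet
        · exact Set.mem_insert_of_mem _
            ⟨v, hv, (Set.indicator_of_mem hv (fun v => f v + 1)).symm⟩
        · simp [vcol, hv]
      · exact Set.mem_insert _ _
    rintro _ (rfl | ⟨v, hv, rfl⟩)
    · obtain ⟨v₀⟩ := hG.nonempty
      by_cases hv₀ : v₀ ∈ G.leafSet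
      · obtain ⟨w, hw⟩ := Set.ncard_eq_one.mp hv₀
        exact Or.inr ⟨s(v₀, w), show w ∈ G.neighborSet v₀ from hw ▸ rfl, rfl⟩
      · exact Or.inl ⟨v₀, Set.indicator_of_notMem hv₀ _⟩
    · exact Or.inl ⟨v, Set.indicator_of_mem hv _⟩
  have hinj : Set.InjOn (fun v => f v + 1) G.leafSet :=
    fun a _ b _ hab => hf (Nat.succ_injective hab)
  unfold totalColorsUsed
  rw [hcolors, Set.ncard_insert_of_notMem (by simp), hinj.ncard_image, leafCount_eq_ncard_leafSet]

end LowerBound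

/-- If `T` is a tree, then `tmc(T) = l(T) + 1`. -/
theorem stmt_1 {V : Type*} [Fintype V] (T : SimpleGraph V) (hT : T.IsTree) :
    tmc T = leafCount T + 1 := by
  refine IsGreatest.csSup_eq ⟨exists_isTMCColoring_totalColorsUsed_eq hT.connected, ?_⟩
  rintro k ⟨vcol, ecol, h, rfl⟩
  exact h.totalColorsUsed_le hT
end

section
/- For every connected graph G with n vertices and m edges, tmc(G) ≥ m − n + 2 + l(G). -/
open SimpleGraph

/-!
Fix a spanning tree `T` of `G` with `l(G)` leaves. Give the edges and the internal vertices of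
`T` one common colour, and give each of the `m - n + 1` edges outside `T` and each of the `l(G)`
leaves of `T` a fresh colour of its own. Any two vertices are joined by their path in `T`, whose
edges and internal vertices all carry the common colour (internal vertices of a path have two
neighbours, so they are not leaves). This uses `1 + (m - n + 1) + l(G)` colours.
-/

namespace SimpleGraph

variable {V : Type*} {G : SimpleGraph V}

lemma Walk.IsPath.ncard_neighborSet_ne_one {u v w : V} {p : G.Walk u v} (hp : p.IsPath)
    (hw : w ∈ p.support) (hwu : w ≠ u) (hwv : w ≠ v) : (G.neighborSet w).ncard ≠ 1 := by
  obtain ⟨i, rfl, hi⟩ := Walk.mem_support_iff_exists_getVert.mp hw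
  have hi0 : i ≠ 0 := by rintro rfl; exact hwu p.getVert_zero
  have hilt : i < p.length := hi.lt_of_ne (by rintro rfl; exact hwv p.getVert_length)
  intro h
  obtain ⟨x, hx⟩ := Set.ncard_eq_one.mp h
  have hsub : p.toSubgraph.neighborSet (p.getVert i) ⊆ {x} :=
    hx ▸ fun y hy => p.toSubgraph.adj_sub hy
  have := Set.ncard_le_ncard hsub
  rw [hp.ncard_neighborSet_toSubgraph_internal_eq_two hi0 hilt, Set.ncard_singleton] at this
  omega

lemma isTMCColoring_of_isTree_le {T : SimpleGraph V} (hTG : T ≤ G) (hT : T.IsTree)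
    {vcol : V → ℕ} {ecol : Sym2 V → ℕ} {c : ℕ}
    (hvcol : ∀ v, (T.neighborSet v).ncard ≠ 1 → vcol v = c)
    (hecol : ∀ e ∈ T.edgeSet, ecol e = c) :
    IsTMCColoring G vcol ecol := by
  intro u v
  obtain ⟨p, hp, -⟩ := hT.existsUnique_path u v
  refine ⟨p.mapLe hTG, hp.mapLe hTG, c, fun e he => hecol e ?_, fun w hw hwu hwv => hvcol w ?_⟩
  · exact p.edges_subset_edgeSet (Walk.edges_mapLe_eq_edges hTG p ▸ he)
  · exact hp.ncard_neighborSet_ne_one (Walk.support_mapLe_eq_support hTG p ▸ hw) hwu hwv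

lemma IsTree.ncard_edgeSet_add_one [Finite V] (hG : G.IsTree) :
    G.edgeSet.ncard + 1 = Nat.card V := by
  rw [← Nat.card_coe_set_eq]
  exact (isTree_iff_connected_and_card.mp hG).2

lemma totalColorsUsed_le [Finite V] (vcol : V → ℕ) (ecol : Sym2 V → ℕ) :
    totalColorsUsed G vcol ecol ≤ Nat.card V + G.edgeSet.ncard :=
  calc totalColorsUsed G vcol ecol
      ≤ (Set.range vcol).ncard + (ecol '' G.edgeSet).ncard := Set.ncard_union_le _ _
    _ ≤ Nat.card V + G.edgeSet.ncard := by
      gcongr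
      · rw [← Set.image_univ, ← Set.ncard_univ]
        exact Set.ncard_image_le Set.finite_univ
      · exact Set.ncard_image_le G.edgeSet.toFinite

lemma totalColorsUsed_le_tmc [Finite V] {vcol : V → ℕ} {ecol : Sym2 V → ℕ}
    (h : IsTMCColoring G vcol ecol) : totalColorsUsed G vcol ecol ≤ tmc G :=
  le_csSup ⟨_, by rintro _ ⟨vcol, ecol, -, rfl⟩; exact totalColorsUsed_le vcol ecol⟩
    ⟨vcol, ecol, h, rfl⟩

lemma Connected.exists_isTree_le_leafCount_eq_maxLeaves [Finite V] (hG : G.Connected) :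
    ∃ T ≤ G, T.IsTree ∧ leafCount T = maxLeaves G := by
  obtain ⟨T, hTG, hT⟩ := hG.exists_isTree_le
  exact Nat.sSup_mem (s := {k | ∃ T ≤ G, T.IsTree ∧ leafCount T = k}) ⟨_, T, hTG, hT, rfl⟩
    ⟨Nat.card V, by rintro _ ⟨T, -, -, rfl⟩; exact Set.ncard_le_card _⟩

open Classical in
/-- Colour classes are indexed by `Option (Sym2 V ⊕ V)` through `idx`: `none` is shared by the
edges and the non-leaves of `T`, and every edge outside `T` and every leaf of `T` has its own. -/
noncomputable def treeVertexColoring (T : SimpleGraph V) (idx : Option (Sym2 V ⊕ V) → ℕ)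
    (v : V) : ℕ :=
  if (T.neighborSet v).ncard = 1 then idx (some (.inr v)) else idx none

open Classical in
noncomputable def treeEdgeColoring (T : SimpleGraph V) (idx : Option (Sym2 V ⊕ V) → ℕ)
    (e : Sym2 V) : ℕ :=
  if e ∈ T.edgeSet then idx none else idx (some (.inl e))

lemma isTMCColoring_treeColoring {T : SimpleGraph V} (hTG : T ≤ G) (hT : T.IsTree)
    (idx : Option (Sym2 V ⊕ V) → ℕ) :
    IsTMCColoring G (treeVertexColoring T idx) (treeEdgeColoring T idx) :=
  isTMCColoring_of_isTree_le hTG hT (fun _ hv => if_neg hv) (fun _ he => if_pos he)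

lemma one_add_ncard_sdiff_add_leafCount_le_totalColorsUsed [Finite V] [Nonempty V]
    {T : SimpleGraph V} (hTG : T ≤ G) {idx : Option (Sym2 V ⊕ V) → ℕ}
    (hidx : idx.Injective) :
    1 + (G.edgeSet \ T.edgeSet).ncard + leafCount T ≤
      totalColorsUsed G (treeVertexColoring T idx) (treeEdgeColoring T idx) := by
  set L := {v : V | (T.neighborSet v).ncard = 1}
  set S : Set (Option (Sym2 V ⊕ V)) :=
    insert none (some '' (Sum.inl '' (G.edgeSet \ T.edgeSet) ∪ Sum.inr '' L))
  have hS : S.ncard = 1 + (G.edgeSet \ T.edgeSet).ncard + leafCount T := by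
    have hdisj : Disjoint (Sum.inl '' (G.edgeSet \ T.edgeSet)) (Sum.inr '' L) :=
      Set.isCompl_range_inl_range_inr.disjoint.mono
        (Set.image_subset_range _ _) (Set.image_subset_range _ _)
    rw [Set.ncard_insert_of_notMem (by simp),
      Set.ncard_image_of_injective _ (Option.some_injective _), Set.ncard_union_eq hdisj,
      Set.ncard_image_of_injective _ Sum.inl_injective,
      Set.ncard_image_of_injective _ Sum.inr_injective]
    change _ = 1 + _ + L.ncard
    omega
  have hnone : idx none ∈ Set.range (treeVertexColoring T idx) ∪
      treeEdgeColoring T idx '' G.edgeSet := by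
    obtain ⟨v⟩ := ‹Nonempty V›
    by_cases hv : v ∈ L
    · obtain ⟨w, hw⟩ : (T.neighborSet v).Nonempty :=
        Set.nonempty_of_ncard_ne_zero (hv.out ▸ one_ne_zero)
      exact Or.inr ⟨s(v, w), hTG hw, if_pos hw⟩
    · exact Or.inl ⟨v, if_neg hv⟩
  have hsub : idx '' S ⊆ Set.range (treeVertexColoring T idx) ∪
      treeEdgeColoring T idx '' G.edgeSet := by
    rintro _ ⟨_, rfl | ⟨_, ⟨e, ⟨heG, heT⟩, rfl⟩ | ⟨v, hv, rfl⟩, rfl⟩, rfl⟩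
    · exact hnone
    · exact Or.inr ⟨e, heG, if_neg heT⟩
    · exact Or.inl ⟨v, if_pos hv⟩
  rw [← hS, ← Set.ncard_image_of_injective S hidx]
  exact Set.ncard_le_ncard hsub ((Set.finite_range _).union (G.edgeSet.toFinite.image _))

end SimpleGraph

/-- For every connected graph `G` with `n` vertices and `m` edges,
`tmc(G) ≥ m - n + 2 + l(G)`. -/
theorem stmt_2 {V : Type*} [Fintype V] (G : SimpleGraph V) (hG : G.Connected) :
    (G.edgeSet.ncard : ℤ) - Fintype.card V + 2 + maxLeaves G ≤ tmc G := by
  have := hG.nonempty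
  obtain ⟨T, hTG, hT, hleaves⟩ := hG.exists_isTree_le_leafCount_eq_maxLeaves
  obtain ⟨idx, hidx⟩ := exists_injective_nat (Option (Sym2 V ⊕ V))
  have hcolors := one_add_ncard_sdiff_add_leafCount_le_totalColorsUsed hTG hidx
  have htmc := totalColorsUsed_le_tmc (isTMCColoring_treeColoring hTG hT idx)
  have hcotree := Set.ncard_sdiff_add_ncard_of_subset (edgeSet_mono hTG)
  have hTcard := hT.ncard_edgeSet_add_one
  rw [Nat.card_eq_fintype_card] at hTcard
  omega
end

section
/- In any extremal TMC-coloring of a connected graph G, for every color c that is used on at least one edge, the subgraph of G formed by the edges colored c is a tree, and every internal (non-leaf) vertex of this tree is colored c. -/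
open SimpleGraph

/-- The subgraph of `G` formed by the edges colored `c` (together with their
endpoints as vertices). -/
def colorSubgraph {V : Type*} (G : SimpleGraph V) (ecol : Sym2 V → ℕ) (c : ℕ) :
    G.Subgraph where
  verts := {v | ∃ e ∈ G.edgeSet, ecol e = c ∧ v ∈ e}
  Adj a b := G.Adj a b ∧ ecol s(a, b) = c
  adj_sub h := h.1
  edge_vert {a b} h := ⟨s(a, b), h.1, h.2, Sym2.mem_mk_left a b⟩
  symm := ⟨fun a b h => ⟨h.1.symm, by rw [Sym2.eq_swap]; exact h.2⟩⟩

/-!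
Everything rests on one exchange argument: if some elements of color `c` can be recolored with
a fresh color while `c` stays in use and every pair of vertices keeps a total monochromatic
path, then the coloring was not extremal. Recoloring a single `c`-edge shows that every `c`-edge
has an endpoint of color `c` (unless it is the only element of color `c`), and that no `c`-edge
`xy` has a detour from `x` to `y` along other `c`-edges through vertices of color `c`.
Recoloring a component of the graph of `c`-edges between `c`-vertices shows that this graph
joins all vertices of color `c`. Hence the `c`-edges form a connected graph; a vertex not of
color `c` with two `c`-neighbors would close a detour, so internal vertices have color `c`; and
then a cycle of `c`-edges, all of whose vertices are internal, is itself a detour.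
-/

namespace SimpleGraph.Walk

variable {V : Type*} {G : SimpleGraph V} {u w : V}

theorem exists_eq_append_cons_of_mem_edges {p : G.Walk u w} {e : Sym2 V} (he : e ∈ p.edges) :
    ∃ (a b : V) (hab : G.Adj a b) (p₁ : G.Walk u a) (p₂ : G.Walk b w),
      s(a, b) = e ∧ p = p₁.append (cons hab p₂) := by
  induction p with
  | nil => simp at he
  | cons h p ih =>
    rcases List.mem_cons.mp he with rfl | he
    · exact ⟨_, _, h, nil, p, rfl, rfl⟩
    · obtain ⟨a, b, hab, p₁, p₂, rfl, rfl⟩ := ih he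
      exact ⟨a, b, hab, cons h p₁, p₂, rfl, rfl⟩

theorem IsPath.getVert_ne_of_pos_of_lt {p : G.Walk u w} (hp : p.IsPath) {i : ℕ} (h0 : 0 < i)
    (hi : i < p.length) : p.getVert i ≠ u ∧ p.getVert i ≠ w :=
  ⟨fun h => by rw [hp.getVert_eq_start_iff hi.le] at h; omega,
    fun h => by rw [hp.getVert_eq_end_iff hi.le] at h; omega⟩

theorem exists_getVert_eq_of_mem_support {p : G.Walk u w} {z : V} (hz : z ∈ p.support)
    (hzu : z ≠ u) (hzw : z ≠ w) : ∃ i, 0 < i ∧ i < p.length ∧ p.getVert i = z := by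
  obtain ⟨i, rfl, hi⟩ := mem_support_iff_exists_getVert.mp hz
  refine ⟨i, Nat.pos_of_ne_zero fun h => hzu (by simp [h]),
    lt_of_le_of_ne hi fun h => hzw (by simp [h]), rfl⟩

theorem IsPath.exists_mem_interior_of_mem_edges {p : G.Walk u w} (hp : p.IsPath)
    (hl : 2 ≤ p.length) {e : Sym2 V} (he : e ∈ p.edges) :
    ∃ x ∈ e, x ∈ p.support ∧ x ≠ u ∧ x ≠ w := by
  induction e using Sym2.ind with | _ a b =>
  obtain ⟨i, hi, hie⟩ := (mk_mem_edges_iff_exists p).mp he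
  obtain ⟨j, hj0, hjl, hj⟩ : ∃ j, 0 < j ∧ j < p.length ∧ (j = i ∨ j = i + 1) := by
    rcases Nat.eq_zero_or_pos i with rfl | hi0
    · exact ⟨1, by omega, by omega, Or.inr rfl⟩
    · exact ⟨i, hi0, hi, Or.inl rfl⟩
  refine ⟨p.getVert j, ?_, p.getVert_mem_support j, hp.getVert_ne_of_pos_of_lt hj0 hjl⟩
  rw [← hie]
  rcases hj with rfl | rfl <;> simp

end SimpleGraph.Walk

section TMCPath

variable {V : Type*} {G : SimpleGraph V} {vcol vcol' : V → ℕ} {ecol ecol' : Sym2 V → ℕ}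
  {u w : V} {c : ℕ}

theorem isTMCPath_of_length_le_one {P : G.Walk u w} (hP : P.IsPath) (hl : P.length ≤ 1) :
    IsTMCPath G vcol ecol P := by
  refine ⟨hP, ?_⟩
  match P, hl with
  | .nil, _ => exact ⟨0, by simp, by simp⟩
  | .cons _ .nil, _ => exact ⟨ecol s(u, w), by simp, by simp⟩

theorem IsTMCPath.congr {P : G.Walk u w} (h : IsTMCPath G vcol ecol P)
    (he : ∀ e ∈ P.edges, ecol' e = ecol e)
    (hv : ∀ z ∈ P.support, z ≠ u → z ≠ w → vcol' z = vcol z) : IsTMCPath G vcol' ecol' P := by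
  obtain ⟨hP, d, hPe, hPv⟩ := h
  exact ⟨hP, d, fun e h => (he e h).trans (hPe e h),
    fun z hz hzu hzw => (hv z hz hzu hzw).trans (hPv z hz hzu hzw)⟩

theorem IsTMCPath.color_eq {P : G.Walk u w} (h : IsTMCPath G vcol ecol P) {e : Sym2 V}
    (he : e ∈ P.edges) (hc : ecol e = c) :
    (∀ e ∈ P.edges, ecol e = c) ∧ ∀ z ∈ P.support, z ≠ u → z ≠ w → vcol z = c := by
  obtain ⟨-, d, hPe, hPv⟩ := h
  obtain rfl : d = c := (hPe e he).symm.trans hc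
  exact ⟨hPe, hPv⟩

theorem SimpleGraph.Walk.exists_isTMCPath (R : G.Walk u w) (he : ∀ e ∈ R.edges, ecol e = c)
    (hv : ∀ z ∈ R.support, z ≠ u → z ≠ w → vcol z = c) :
    ∃ Q : G.Walk u w, IsTMCPath G vcol ecol Q := by
  classical
  exact ⟨R.bypass, R.bypass_isPath, c, fun e h => he e (R.edges_bypass_subset_edges h),
    fun z hz => hv z (R.support_bypass_subset_support hz)⟩

end TMCPath

def IsExtremalTMCColoring {V : Type*} (G : SimpleGraph V) (vcol : V → ℕ)
    (ecol : Sym2 V → ℕ) : Prop :=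
  IsTMCColoring G vcol ecol ∧ totalColorsUsed G vcol ecol = tmc G

section Exchange

variable {V : Type*} [Finite V] {G : SimpleGraph V} {vcol : V → ℕ} {ecol : Sym2 V → ℕ}

theorem totalColorsUsed_le_card (vc : V → ℕ) (ec : Sym2 V → ℕ) :
    totalColorsUsed G vc ec ≤ Nat.card V + Nat.card (Sym2 V) := by
  refine (Set.ncard_union_le _ _).trans (add_le_add ?_ ((Set.ncard_image_le (Set.toFinite _)).trans
    (Set.ncard_le_card _)))
  rw [← Set.image_univ]
  exact (Set.ncard_image_le (Set.toFinite _)).trans (Set.ncard_univ V).le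

theorem exists_notMem_colors : ∃ N, N ∉ Set.range vcol ∪ ecol '' G.edgeSet :=
  ((Set.finite_range vcol).union (G.edgeSet.toFinite.image ecol)).exists_notMem

namespace IsExtremalTMCColoring

theorem totalColorsUsed_le (h : IsExtremalTMCColoring G vcol ecol) {vc : V → ℕ}
    {ec : Sym2 V → ℕ} (h' : IsTMCColoring G vc ec) :
    totalColorsUsed G vc ec ≤ totalColorsUsed G vcol ecol :=
  h.2 ▸ le_csSup ⟨_, by rintro _ ⟨vc, ec, -, rfl⟩; exact totalColorsUsed_le_card vc ec⟩
    ⟨vc, ec, h', rfl⟩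

theorem not_isTMCColoring_piecewise (h : IsExtremalTMCColoring G vcol ecol) {c N : ℕ}
    (hN : N ∉ Set.range vcol ∪ ecol '' G.edgeSet) {X : Set (Sym2 V)} {Y : Set V}
    [DecidablePred (· ∈ X)] [DecidablePred (· ∈ Y)]
    (hX : ∀ e ∈ X, e ∈ G.edgeSet ∧ ecol e = c) (hY : ∀ v ∈ Y, vcol v = c)
    (hne : X.Nonempty ∨ Y.Nonempty)
    (hrest : (∃ e ∈ G.edgeSet, ecol e = c ∧ e ∉ X) ∨ ∃ v ∉ Y, vcol v = c) :
    ¬ IsTMCColoring G (Y.piecewise (fun _ => N) vcol) (X.piecewise (fun _ => N) ecol) := by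
  intro h'
  set vc' := Y.piecewise (fun _ => N) vcol
  set ec' := X.piecewise (fun _ => N) ecol
  have hc : c ∈ Set.range vc' ∪ ec' '' G.edgeSet := by
    rcases hrest with ⟨e, heG, hec, heX⟩ | ⟨v, hvY, hvc⟩
    · exact Or.inr ⟨e, heG, by simp [ec', heX, hec]⟩
    · exact Or.inl ⟨v, by simp [vc', hvY, hvc]⟩
  have hsub : insert N (Set.range vcol ∪ ecol '' G.edgeSet) ⊆
      Set.range vc' ∪ ec' '' G.edgeSet := by
    rintro d (rfl | ⟨v, rfl⟩ | ⟨e, heG, rfl⟩)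
    · rcases hne with ⟨e, heX⟩ | ⟨v, hvY⟩
      · exact Or.inr ⟨e, (hX e heX).1, by simp [ec', heX]⟩
      · exact Or.inl ⟨v, by simp [vc', hvY]⟩
    · by_cases hvY : v ∈ Y
      · exact hY v hvY ▸ hc
      · exact Or.inl ⟨v, by simp [vc', hvY]⟩
    · by_cases heX : e ∈ X
      · exact (hX e heX).2 ▸ hc
      · exact Or.inr ⟨e, heG, by simp [ec', heX]⟩
  have hlt := Set.ncard_le_ncard hsub
    ((Set.finite_range vc').union (G.edgeSet.toFinite.image ec'))
  rw [Set.ncard_insert_of_notMem hN] at hlt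
  exact absurd (h.totalColorsUsed_le h') (by unfold totalColorsUsed; omega)

end IsExtremalTMCColoring

end Exchange

def colorCore {V : Type*} (G : SimpleGraph V) (vcol : V → ℕ) (ecol : Sym2 V → ℕ) (c : ℕ) :
    SimpleGraph V where
  Adj x y := G.Adj x y ∧ ecol s(x, y) = c ∧ vcol x = c ∧ vcol y = c
  symm := ⟨fun x _ h => ⟨h.1.symm, Sym2.eq_swap (a := x) ▸ h.2.1, h.2.2.2, h.2.2.1⟩⟩
  loopless := ⟨fun x h => G.loopless.irrefl x h.1⟩

section ColorCore

variable {V : Type*} {G : SimpleGraph V} {vcol : V → ℕ} {ecol : Sym2 V → ℕ} {c : ℕ}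

theorem colorCore_le : colorCore G vcol ecol c ≤ G := fun _ _ h => h.1

theorem mem_of_colorCore_reachable {Y : Set V}
    (hY : ∀ y z, y ∈ Y → (colorCore G vcol ecol c).Adj y z → z ∈ Y) {y z : V}
    (hyz : (colorCore G vcol ecol c).Reachable y z) (hy : y ∈ Y) : z ∈ Y := by
  obtain ⟨p⟩ := hyz
  induction p with
  | nil => exact hy
  | cons h _ ih => exact ih (hY _ _ hy h)

theorem SimpleGraph.Walk.colorCore_color_eq {a b : V} (T : (colorCore G vcol ecol c).Walk a b)
    (ha : vcol a = c) : (∀ e ∈ T.edges, ecol e = c) ∧ ∀ z ∈ T.support, vcol z = c := by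
  induction T with
  | nil => simpa using ha
  | cons h _ ih =>
    obtain ⟨hTe, hTv⟩ := ih h.2.2.2
    exact ⟨by simpa [h.2.1] using hTe, by simpa [ha] using hTv⟩

theorem SimpleGraph.Walk.IsPath.colorCore_reachable {u w : V} {P : G.Walk u w} (hP : P.IsPath)
    (hPe : ∀ e ∈ P.edges, ecol e = c) (hPv : ∀ z ∈ P.support, z ≠ u → z ≠ w → vcol z = c)
    {x y : V} (hx : x ∈ P.support) (hxu : x ≠ u) (hxw : x ≠ w) (hy : y ∈ P.support)
    (hyu : y ≠ u) (hyw : y ≠ w) : (colorCore G vcol ecol c).Reachable x y := by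
  have hcol : ∀ i, 0 < i → i < P.length → vcol (P.getVert i) = c := fun i h0 hi =>
    hPv _ (P.getVert_mem_support i) (hP.getVert_ne_of_pos_of_lt h0 hi).1
      (hP.getVert_ne_of_pos_of_lt h0 hi).2
  have key : ∀ i, 0 < i → i < P.length →
      (colorCore G vcol ecol c).Reachable (P.getVert 1) (P.getVert i) := by
    intro i h0 hi
    induction i with
    | zero => omega
    | succ i ih =>
      rcases Nat.eq_zero_or_pos i with rfl | hi0
      · rfl
      · refine (ih hi0 (by omega)).trans (Adj.reachable ⟨P.adj_getVert_succ (by omega), ?_,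
          hcol i hi0 (by omega), hcol (i + 1) h0 hi⟩)
        exact hPe _ ((P.mk_mem_edges_iff_exists).mpr ⟨i, by omega, rfl⟩)
  obtain ⟨i, hi0, hil, rfl⟩ := P.exists_getVert_eq_of_mem_support hx hxu hxw
  obtain ⟨j, hj0, hjl, rfl⟩ := P.exists_getVert_eq_of_mem_support hy hyu hyw
  exact (key i hi0 hil).symm.trans (key j hj0 hjl)

end ColorCore

theorem reachable_coe_colorSubgraph {V : Type*} {G : SimpleGraph V} {ecol : Sym2 V → ℕ} {c : ℕ}
    {r u : V} (T : G.Walk r u) (hT : ∀ e ∈ T.edges, ecol e = c)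
    (hr : r ∈ (colorSubgraph G ecol c).verts) (hu : u ∈ (colorSubgraph G ecol c).verts) :
    (colorSubgraph G ecol c).coe.Reachable ⟨r, hr⟩ ⟨u, hu⟩ := by
  induction T with
  | nil => rfl
  | cons hab T ih =>
    have hadj : (colorSubgraph G ecol c).Adj _ _ := ⟨hab, hT _ List.mem_cons_self⟩
    exact (Adj.reachable (G := (colorSubgraph G ecol c).coe) (u := ⟨_, hr⟩)
      (v := ⟨_, hadj.snd_mem⟩) hadj).trans
      (ih (fun e he => hT e (List.mem_cons_of_mem _ he)) _ hu)

namespace IsExtremalTMCColoring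

variable {V : Type*} [Finite V] {G : SimpleGraph V} {vcol : V → ℕ} {ecol : Sym2 V → ℕ}
  {c : ℕ}

theorem false_of_reroute (h : IsExtremalTMCColoring G vcol ecol) {e₀ : Sym2 V}
    (he₀ : e₀ ∈ G.edgeSet) (hc : ecol e₀ = c)
    (hrest : (∃ e ∈ G.edgeSet, ecol e = c ∧ e ≠ e₀) ∨ ∃ v, vcol v = c)
    (hreroute : ∀ u w (P : G.Walk u w), IsTMCPath G vcol ecol P → 2 ≤ P.length →
      e₀ ∈ P.edges → ∃ R : G.Walk u w, (∀ e ∈ R.edges, ecol e = c ∧ e ≠ e₀) ∧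
        ∀ z ∈ R.support, z ≠ u → z ≠ w → vcol z = c) : False := by
  classical
  obtain ⟨N, hN⟩ := exists_notMem_colors (G := G) (vcol := vcol) (ecol := ecol)
  have hX : ∀ e ∈ ({e₀} : Set (Sym2 V)), e ∈ G.edgeSet ∧ ecol e = c := by simp [he₀, hc]
  apply h.not_isTMCColoring_piecewise hN hX (Y := ∅) (by simp) (by simp) (by simpa using hrest)
  rw [Set.piecewise_empty]
  intro u w
  obtain ⟨P, hP⟩ := h.1 u w
  by_cases he : e₀ ∈ P.edges
  · rcases le_or_gt P.length 1 with hl | hl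
    · exact ⟨P, isTMCPath_of_length_le_one hP.1 hl⟩
    · obtain ⟨R, hRe, hRv⟩ := hreroute u w P hP hl he
      exact R.exists_isTMCPath (fun e he' => by simp [hRe e he']) hRv
  · exact ⟨P, hP.congr (fun e he' => by simp [show e ≠ e₀ by rintro rfl; exact he he'])
      fun _ _ _ _ => rfl⟩

theorem color_eq_of_adj (h : IsExtremalTMCColoring G vcol ecol) {v w : V} (hvw : G.Adj v w)
    (hc : ecol s(v, w) = c) (hv : vcol v ≠ c)
    (hrest : (∃ e ∈ G.edgeSet, ecol e = c ∧ e ≠ s(v, w)) ∨ ∃ x, vcol x = c) : vcol w = c := by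
  by_contra hw
  refine h.false_of_reroute hvw hc hrest fun u w' P hP hl he => ?_
  obtain ⟨-, hPv⟩ := hP.color_eq he hc
  obtain ⟨x, hx, hxP, hxu, hxw⟩ := hP.1.exists_mem_interior_of_mem_edges hl he
  rcases Sym2.mem_iff.mp hx with rfl | rfl
  exacts [(hv (hPv _ hxP hxu hxw)).elim, (hw (hPv _ hxP hxu hxw)).elim]

theorem false_of_colorCore_closed (h : IsExtremalTMCColoring G vcol ecol) {Y : Set V}
    (hYc : ∀ y ∈ Y, vcol y = c) (hY : ∀ y z, y ∈ Y → (colorCore G vcol ecol c).Adj y z → z ∈ Y)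
    (hne : Y.Nonempty) (hrest : ∃ v ∉ Y, vcol v = c) : False := by
  classical
  obtain ⟨N, hN⟩ := exists_notMem_colors (G := G) (vcol := vcol) (ecol := ecol)
  let X : Set (Sym2 V) := {e | (e ∈ G.edgeSet ∧ ecol e = c) ∧ ∃ y ∈ Y, y ∈ e}
  refine h.not_isTMCColoring_piecewise hN (X := X) (fun e he => he.1) hYc (Or.inr hne)
    (Or.inr hrest) fun u w => ?_
  obtain ⟨P, hP⟩ := h.1 u w
  refine ⟨P, ?_⟩
  rcases le_or_gt P.length 1 with hl | hl
  · exact isTMCPath_of_length_le_one hP.1 hl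
  obtain ⟨hpath, d, hPe, hPv⟩ := hP
  -- The interior of a path of color `c` is connected in `colorCore`, so it lies inside `Y` or
  -- avoids it, and then so do the edges of the path, each having an interior endpoint.
  by_cases hmeet : d = c ∧ ∃ z ∈ P.support, z ≠ u ∧ z ≠ w ∧ z ∈ Y
  · obtain ⟨rfl, z₀, hz₀, hz₀u, hz₀w, hz₀Y⟩ := hmeet
    have hin : ∀ z ∈ P.support, z ≠ u → z ≠ w → z ∈ Y := fun z hz hzu hzw =>
      mem_of_colorCore_reachable hY
        (hpath.colorCore_reachable hPe hPv hz₀ hz₀u hz₀w hz hzu hzw) hz₀Y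
    refine ⟨hpath, N, fun e he => Set.piecewise_eq_of_mem _ _ _ ?_,
      fun z hz hzu hzw => Set.piecewise_eq_of_mem _ _ _ (hin z hz hzu hzw)⟩
    obtain ⟨x, hxe, hxP, hxu, hxw⟩ := hpath.exists_mem_interior_of_mem_edges hl he
    exact ⟨⟨P.edges_subset_edgeSet he, hPe e he⟩, x, hin x hxP hxu hxw, hxe⟩
  · refine IsTMCPath.congr ⟨hpath, d, hPe, hPv⟩ (fun e he => Set.piecewise_eq_of_notMem _ _ _ ?_)
      fun z hz hzu hzw => Set.piecewise_eq_of_notMem _ _ _ fun hzY =>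
        hmeet ⟨(hPv z hz hzu hzw).symm.trans (hYc z hzY), z, hz, hzu, hzw, hzY⟩
    rintro ⟨⟨heG, hec⟩, y, hyY, hye⟩
    obtain rfl : d = c := (hPe e he).symm.trans hec
    obtain ⟨x, hxe, hxP, hxu, hxw⟩ := hpath.exists_mem_interior_of_mem_edges hl he
    have hxY : x ∉ Y := fun hxY => hmeet ⟨rfl, x, hxP, hxu, hxw, hxY⟩
    have hyx : y ≠ x := fun hyx => hxY (hyx ▸ hyY)
    obtain rfl := (Sym2.mem_and_mem_iff hyx).mp ⟨hye, hxe⟩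
    exact hxY (hY y x hyY ⟨heG, hec, hYc y hyY, hPv x hxP hxu hxw⟩)

theorem colorCore_reachable (h : IsExtremalTMCColoring G vcol ecol) {a b : V}
    (ha : vcol a = c) (hb : vcol b = c) : (colorCore G vcol ecol c).Reachable a b := by
  by_contra hab
  refine h.false_of_colorCore_closed (Y := {v | (colorCore G vcol ecol c).Reachable a v})
    ?_ (fun y z hy hyz => hy.trans hyz.reachable) ⟨a, .refl a⟩ ⟨b, hab, hb⟩
  rintro y ⟨T⟩
  exact (T.colorCore_color_eq ha).2 y T.end_mem_support

theorem exists_walk_color_eq (h : IsExtremalTMCColoring G vcol ecol) {a b : V}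
    (ha : vcol a = c) (hb : vcol b = c) :
    ∃ T : G.Walk a b, (∀ e ∈ T.edges, ecol e = c) ∧ ∀ z ∈ T.support, vcol z = c := by
  obtain ⟨T⟩ := h.colorCore_reachable ha hb
  obtain ⟨hTe, hTv⟩ := T.colorCore_color_eq ha
  exact ⟨T.mapLe colorCore_le, by simpa [Walk.edges_mapLe_eq_edges] using hTe,
    by simpa [Walk.support_mapLe_eq_support] using hTv⟩

end IsExtremalTMCColoring

namespace IsExtremalTMCColoring

variable {V : Type*} [Finite V] {G : SimpleGraph V} {vcol : V → ℕ} {ecol : Sym2 V → ℕ}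
  {c : ℕ}

theorem false_of_detour (h : IsExtremalTMCColoring G vcol ecol) {x y : V} (hxy : G.Adj x y)
    (hc : ecol s(x, y) = c) (W : G.Walk x y) (hWe : ∀ e ∈ W.edges, ecol e = c ∧ e ≠ s(x, y))
    (hWv : ∀ z ∈ W.support, z ≠ x → z ≠ y → vcol z = c) : False := by
  refine h.false_of_reroute hxy hc ?_ fun u w P hP hl he => ?_
  · cases W with
    | nil => exact (G.loopless.irrefl x hxy).elim
    | cons h' _ => exact Or.inl ⟨_, h', hWe _ List.mem_cons_self⟩
  obtain ⟨hPe, hPv⟩ := hP.color_eq he hc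
  obtain ⟨a, b, hab, P₁, P₂, heq, rfl⟩ := P.exists_eq_append_cons_of_mem_edges he
  obtain ⟨D, hDe, hDv⟩ : ∃ D : G.Walk a b, (∀ e ∈ D.edges, ecol e = c ∧ e ≠ s(x, y)) ∧
      ∀ z ∈ D.support, z ≠ a → z ≠ b → vcol z = c := by
    rcases Sym2.eq_iff.mp heq with ⟨rfl, rfl⟩ | ⟨rfl, rfl⟩
    · exact ⟨W, hWe, hWv⟩
    · exact ⟨W.reverse, by simpa using hWe,
        fun z hz hza hzb => hWv z (by simpa using hz) hzb hza⟩
  have hnd := hP.1.edges_nodup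
  rw [Walk.edges_append, Walk.edges_cons, List.nodup_middle, List.nodup_cons, heq] at hnd
  have hPs : ∀ z, z ∈ P₁.support ∨ z ∈ P₂.support → z ∈ (P₁.append (.cons hab P₂)).support := by
    intro z hz
    rw [Walk.mem_support_append_iff, Walk.support_cons, List.mem_cons]
    tauto
  refine ⟨P₁.append (D.append P₂), fun e he' => ?_, fun z hz hzu hzw => ?_⟩
  · rw [Walk.edges_append, Walk.edges_append, List.mem_append, List.mem_append] at he'
    rcases he' with he' | he' | he'
    · exact ⟨hPe e (by simp [he']), by rintro rfl; exact hnd.1 (List.mem_append_left _ he')⟩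
    · exact hDe e he'
    · exact ⟨hPe e (by simp [he']), by rintro rfl; exact hnd.1 (List.mem_append_right _ he')⟩
  rw [Walk.mem_support_append_iff, Walk.mem_support_append_iff] at hz
  rcases hz with hz | hz | hz
  · exact hPv z (hPs z (.inl hz)) hzu hzw
  · by_cases hza : z = a
    · exact hPv z (hPs z (.inl (hza ▸ P₁.end_mem_support))) hzu hzw
    by_cases hzb : z = b
    · exact hPv z (hPs z (.inr (hzb ▸ P₂.start_mem_support))) hzu hzw
    exact hDv z hz hza hzb
  · exact hPv z (hPs z (.inr hz)) hzu hzw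

theorem color_eq_of_two_le_ncard (h : IsExtremalTMCColoring G vcol ecol) {v : V}
    (hv : 2 ≤ {w : V | (colorSubgraph G ecol c).Adj v w}.ncard) : vcol v = c := by
  by_contra hvc
  obtain ⟨w₁, w₂, ⟨hvw₁, hc₁⟩, ⟨hvw₂, hc₂⟩, hne⟩ := (Set.one_lt_ncard_iff (Set.toFinite _)).mp hv
  have hne' : s(v, w₂) ≠ s(v, w₁) := fun h' => hne (Sym2.congr_right.mp h').symm
  have hw₁ := h.color_eq_of_adj hvw₁ hc₁ hvc (.inl ⟨_, hvw₂, hc₂, hne'⟩)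
  have hw₂ := h.color_eq_of_adj hvw₂ hc₂ hvc (.inl ⟨_, hvw₁, hc₁, hne'.symm⟩)
  obtain ⟨T, hTe, hTv⟩ := h.exists_walk_color_eq hw₂ hw₁
  refine h.false_of_detour hvw₁ hc₁ (.cons hvw₂ T) (fun e he => ?_)
    fun z hz hzv _ => hTv z ((List.mem_cons.mp hz).resolve_left hzv)
  rcases List.mem_cons.mp he with rfl | he
  · exact ⟨hc₂, hne'⟩
  · exact ⟨hTe e he, fun hev => hvc (hTv v (T.fst_mem_support_of_mem_edges (hev ▸ he)))⟩

theorem false_of_isCycle (h : IsExtremalTMCColoring G vcol ecol) {v : V} {p : G.Walk v v}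
    (hp : p.IsCycle) (hle : p.toSubgraph ≤ colorSubgraph G ecol c) : False := by
  have hpe : ∀ e ∈ p.edges, ecol e = c := by
    intro e he
    have := Subgraph.edgeSet_mono hle (p.mem_edges_toSubgraph.mpr he)
    induction e using Sym2.ind with | _ a b => exact this.2
  have hpv : ∀ z ∈ p.support, vcol z = c := fun z hz =>
    h.color_eq_of_two_le_ncard ((hp.ncard_neighborSet_toSubgraph_eq_two hz).symm.le.trans
      (Set.ncard_le_ncard (Subgraph.neighborSet_subset_of_subgraph hle z)))
  cases p with
  | nil => exact hp.not_nil Walk.Nil.nil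
  | cons hvb q =>
    obtain ⟨-, hvbq⟩ := (Walk.cons_isCycle_iff q hvb).mp hp
    refine h.false_of_detour hvb (hpe _ List.mem_cons_self) q.reverse (fun e he => ?_)
      fun z hz _ _ => hpv z (List.mem_cons_of_mem _ (by simpa using hz))
    rw [Walk.edges_reverse, List.mem_reverse] at he
    exact ⟨hpe e (List.mem_cons_of_mem _ he), by rintro rfl; exact hvbq he⟩

theorem colorSubgraph_isAcyclic (h : IsExtremalTMCColoring G vcol ecol) :
    (colorSubgraph G ecol c).coe.IsAcyclic := fun _ q hq =>
  h.false_of_isCycle (c := c) ((Walk.isCycle_map_iff_of_injective Subgraph.hom_injective).mpr hq)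
    (by rw [Walk.toSubgraph_map]; exact Subgraph.coeSubgraph_le _)

theorem exists_root_colored_walks (h : IsExtremalTMCColoring G vcol ecol)
    (hc : ∃ e ∈ G.edgeSet, ecol e = c) :
    ∃ r ∈ (colorSubgraph G ecol c).verts, ∀ u ∈ (colorSubgraph G ecol c).verts,
      ∃ T : G.Walk r u, ∀ e ∈ T.edges, ecol e = c := by
  obtain ⟨e, he, hec⟩ := hc
  induction e using Sym2.ind with | _ p q =>
  rw [mem_edgeSet] at he
  have hp : p ∈ (colorSubgraph G ecol c).verts := ⟨_, he, hec, Sym2.mem_mk_left p q⟩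
  by_cases hcv : ∃ x, vcol x = c
  · obtain ⟨r, hr, hrc⟩ : ∃ r ∈ (colorSubgraph G ecol c).verts, vcol r = c := by
      by_cases hpc : vcol p = c
      · exact ⟨p, hp, hpc⟩
      · exact ⟨q, ⟨_, he, hec, Sym2.mem_mk_right p q⟩, h.color_eq_of_adj he hec hpc (.inr hcv)⟩
    refine ⟨r, hr, fun u ⟨e', he', hec', hue'⟩ => ?_⟩
    by_cases huc : vcol u = c
    · obtain ⟨T, hT, -⟩ := h.exists_walk_color_eq hrc huc
      exact ⟨T, hT⟩
    obtain ⟨z, rfl⟩ := Sym2.mem_iff_exists.mp hue'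
    obtain ⟨T, hT, -⟩ := h.exists_walk_color_eq hrc (h.color_eq_of_adj he' hec' huc (.inr hcv))
    refine ⟨T.concat he'.symm, fun e he => ?_⟩
    rw [Walk.edges_concat, List.concat_eq_append, List.mem_append, List.mem_singleton] at he
    rcases he with he | rfl
    exacts [hT e he, Sym2.eq_swap ▸ hec']
  · refine ⟨p, hp, fun u ⟨e', he', hec', hue'⟩ => ?_⟩
    obtain ⟨z, rfl⟩ := Sym2.mem_iff_exists.mp hue'
    have : s(u, z) = s(p, q) := by
      by_contra hne
      exact hcv ⟨z, h.color_eq_of_adj he' hec' (fun hu => hcv ⟨u, hu⟩)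
        (.inl ⟨_, he, hec, Ne.symm hne⟩)⟩
    rcases Sym2.eq_iff.mp this with ⟨rfl, -⟩ | ⟨rfl, -⟩
    · exact ⟨.nil, by simp⟩
    · exact ⟨.cons he .nil, by simpa using hec⟩

theorem colorSubgraph_connected (h : IsExtremalTMCColoring G vcol ecol)
    (hc : ∃ e ∈ G.edgeSet, ecol e = c) : (colorSubgraph G ecol c).coe.Connected := by
  obtain ⟨r, hr, hwalk⟩ := h.exists_root_colored_walks hc
  rw [connected_iff_exists_forall_reachable]
  refine ⟨⟨r, hr⟩, fun ⟨u, hu⟩ => ?_⟩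
  obtain ⟨T, hT⟩ := hwalk u hu
  exact reachable_coe_colorSubgraph T hT hr hu

end IsExtremalTMCColoring

theorem stmt_4_general {V : Type*} [Fintype V] (G : SimpleGraph V)
    (vcol : V → ℕ) (ecol : Sym2 V → ℕ)
    (hf : IsTMCColoring G vcol ecol) (hext : totalColorsUsed G vcol ecol = tmc G)
    (c : ℕ) (hc : ∃ e ∈ G.edgeSet, ecol e = c) :
    (colorSubgraph G ecol c).coe.IsTree ∧
      ∀ v : V, 2 ≤ {w : V | (colorSubgraph G ecol c).Adj v w}.ncard → vcol v = c := by
  have h : IsExtremalTMCColoring G vcol ecol := ⟨hf, hext⟩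
  exact ⟨⟨h.colorSubgraph_connected hc, h.colorSubgraph_isAcyclic⟩,
    fun _ hv => h.color_eq_of_two_le_ncard hv⟩

/-- In any extremal TMC-coloring of a connected graph `G`, for every color `c` used on
at least one edge, the subgraph formed by the edges colored `c` is a tree whose internal
(non-leaf) vertices are all colored `c`. -/
theorem stmt_4 {V : Type*} [Fintype V] (G : SimpleGraph V) (hG : G.Connected)
    (vcol : V → ℕ) (ecol : Sym2 V → ℕ)
    (hf : IsTMCColoring G vcol ecol) (hext : totalColorsUsed G vcol ecol = tmc G)
    (c : ℕ) (hc : ∃ e ∈ G.edgeSet, ecol e = c) :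
    (colorSubgraph G ecol c).coe.IsTree ∧
      ∀ v : V, 2 ≤ {w : V | (colorSubgraph G ecol c).Adj v w}.ncard → vcol v = c :=
  stmt_4_general G vcol ecol hf hext c hc
end

section
/- Let G be the wheel W_{n−1} of order n ≥ 5 (the graph obtained from a cycle on n−1 vertices by joining one additional vertex to every vertex of the cycle), with m edges. Then tmc(G) = m − n + 2 + l(G). -/
open SimpleGraph

/-- The wheel `W_k`: the join of a single hub vertex (`none`) with a cycle `C_k`
on the vertices `some 0, …, some (k-1)`. -/
def wheel (k : ℕ) : SimpleGraph (Option (Fin k)) where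
  Adj u v :=
    match u, v with
    | none, none => False
    | none, some _ => True
    | some _, none => True
    | some i, some j => i ≠ j ∧ (((i : ℕ) + 1) % k = (j : ℕ) ∨ ((j : ℕ) + 1) % k = (i : ℕ))
  symm := by
    constructor
    rintro (_ | i) (_ | j) h <;> simp_all
    tauto
  loopless := by
    constructor
    rintro (_ | i) h <;> simp_all


/-! Write `k = n - 1`, so the wheel has `k + 1` vertices, `2k` edges and `l = k` (a spanning star
is a tree with `k` leaves, and a tree on at least three vertices has a non-leaf); the claim is
`tmc = 2k + 1`. Colouring the hub and all spokes with one colour and every other vertex and edge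
with its own colour is a TMC-colouring with `2k + 1` colours.

Conversely, for each rim vertex `i` the total monochromatic path from `i` to `i + 2` has a
second vertex `b ∈ {hub, i + 1, i - 1}` whose colour equals that of the edge `ib`. Picking one
such coincidence per `i` marks `k` of the `3k + 1` vertices and edges, each having the colour of
its successor under `hub ← spoke`, `v_j → e_j → v_{j+1}` (`e_j` the rim edge `{j, j + 1}`).
These successor chains leave the marked set, so every colour already occurs among the `2k + 1`
unmarked elements. -/

open SimpleGraph Function

theorem ncard_range_add_card_le_of_iterate_notMem {α β ι : Type*} [Finite α] {f : α → β}
    {next : α → α} {sel : ι → α} (hsel : Injective sel)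
    (hf : ∀ i, f (next (sel i)) = f (sel i))
    (hesc : ∀ x, ∃ m, next^[m] x ∉ Set.range sel) :
    (Set.range f).ncard + Nat.card ι ≤ Nat.card α := by
  have hreach : ∀ m x, next^[m] x ∉ Set.range sel → f x ∈ f '' (Set.range sel)ᶜ := by
    intro m
    induction m with
    | zero => exact fun x hx => ⟨x, hx, rfl⟩
    | succ m ih =>
      intro x hx
      by_cases hsx : x ∈ Set.range sel
      · obtain ⟨i, rfl⟩ := hsx
        rw [← hf]
        exact ih _ hx
      · exact ⟨x, hsx, rfl⟩
  have hsub : Set.range f ⊆ f '' (Set.range sel)ᶜ := by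
    rintro _ ⟨x, rfl⟩
    obtain ⟨m, hm⟩ := hesc x
    exact hreach m x hm
  calc (Set.range f).ncard + Nat.card ι
      ≤ (Set.range sel)ᶜ.ncard + (Set.range sel).ncard := by
        rw [Set.ncard_range_of_injective hsel]
        gcongr
        exact (Set.ncard_le_ncard hsub (Set.toFinite _)).trans
          (Set.ncard_image_le (Set.toFinite _))
    _ = Nat.card α := Set.ncard_compl_add_ncard _

section TMC

variable {V : Type*} {G : SimpleGraph V} {vcol : V → ℕ} {ecol : Sym2 V → ℕ}

theorem IsTMCColoring.exists_adj_ecol_eq_vcol (h : IsTMCColoring G vcol ecol) {u v : V}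
    (hne : u ≠ v) (hnadj : ¬ G.Adj u v) : ∃ b, G.Adj u b ∧ ecol s(u, b) = vcol b := by
  obtain ⟨p, hp, c, hedges, hinternal⟩ := h u v
  cases p with
  | nil => exact absurd rfl hne
  | cons hadj q =>
    rename_i b
    cases q with
    | nil => exact absurd hadj hnadj
    | cons hbw r =>
      obtain ⟨hq, hu⟩ := (Walk.cons_isPath_iff _ _).mp hp
      have hbu : b ≠ u := fun hbu => hu (hbu ▸ Walk.start_mem_support _)
      have hbv : b ≠ v := by
        rintro rfl
        exact ((Walk.cons_isPath_iff _ _).mp hq).2 (Walk.end_mem_support _)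
      refine ⟨b, hadj, ?_⟩
      rw [hedges _ (by simp), hinternal b (by simp) hbu hbv]

theorem isTMCColoring_of_isUniversal {r : V} (hr : G.IsUniversal r) {c : ℕ} (hvr : vcol r = c)
    (hspoke : ∀ v, ecol s(r, v) = c) : IsTMCColoring G vcol ecol := by
  intro u v
  by_cases huv : u = v
  · subst huv
    exact ⟨.nil, .nil, c, by simp, by simp⟩
  by_cases hu : u = r
  · subst hu
    exact ⟨(hr huv).toWalk, (hr huv).isPath_toWalk, c, by simp [hspoke], by simp⟩
  by_cases hv : v = r
  · subst hv
    refine ⟨(hr (Ne.symm huv)).symm.toWalk, (hr (Ne.symm huv)).symm.isPath_toWalk, c, ?_,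
      by simp⟩
    simp only [Adj.edges_toWalk, List.mem_singleton, forall_eq]
    rw [Sym2.eq_swap, hspoke]
  refine ⟨.cons (hr (Ne.symm hu)).symm (.cons (hr (Ne.symm hv)) .nil), ?_, c, ?_, ?_⟩
  · simp [Walk.cons_isPath_iff, hu, huv, Ne.symm hv]
  · simp only [Walk.edges_cons, Walk.edges_nil, List.mem_cons, List.not_mem_nil, or_false]
    rintro e (rfl | rfl)
    · rw [Sym2.eq_swap, hspoke]
    · exact hspoke v
  · simp only [Walk.support_cons, Walk.support_nil, List.mem_cons, List.not_mem_nil, or_false]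
    rintro w (rfl | rfl | rfl) hwu hwv
    exacts [absurd rfl hwu, hvr, absurd rfl hwv]

theorem tmc_eq_of_forall_le {N : ℕ}
    (hle : ∀ vcol ecol, IsTMCColoring G vcol ecol → totalColorsUsed G vcol ecol ≤ N)
    (h : IsTMCColoring G vcol ecol) (hN : N ≤ totalColorsUsed G vcol ecol) : tmc G = N :=
  IsGreatest.csSup_eq ⟨⟨vcol, ecol, h, le_antisymm (hle _ _ h) hN⟩,
    by rintro _ ⟨vcol', ecol', h', rfl⟩; exact hle _ _ h'⟩

end TMC

theorem SimpleGraph.IsUniversal.starGraph_le {V : Type*} {G : SimpleGraph V} {r : V}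
    (hr : G.IsUniversal r) : starGraph r ≤ G := by
  intro x y hxy
  rw [starGraph_adj] at hxy
  obtain ⟨hne, rfl | rfl⟩ := hxy
  exacts [hr hne, (hr hne.symm).symm]

section Leaves

variable {V : Type*} [Finite V]

theorem SimpleGraph.IsTree.leafCount_le {T : SimpleGraph V} (hT : T.IsTree)
    (hV : Nat.card V ≠ 2) : leafCount T ≤ Nat.card V - 1 := by
  classical
  have := Fintype.ofFinite V
  have hdeg : ∀ v, (T.neighborSet v).ncard = T.degree v := fun v => by
    rw [← Nat.card_coe_set_eq, Nat.card_eq_fintype_card, card_neighborSet_eq_degree]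
  -- the degrees sum to `2 (card V - 1)`, which is `card V` only when `card V = 2`
  obtain ⟨v₀, hv₀⟩ : ∃ v₀, (T.neighborSet v₀).ncard ≠ 1 := by
    by_contra! hall
    have hsum := T.sum_degrees_eq_twice_card_edges
    have hedges := hT.card_edgeFinset
    simp only [← hdeg, hall, Finset.sum_const, Finset.card_univ, smul_eq_mul, mul_one] at hsum
    rw [Nat.card_eq_fintype_card] at hV
    omega
  calc leafCount T ≤ ({v₀}ᶜ : Set V).ncard :=
        Set.ncard_le_ncard (fun v hv hvv₀ => hv₀ (hvv₀ ▸ hv)) (Set.toFinite _)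
    _ = Nat.card V - 1 := by rw [Set.ncard_compl, Set.ncard_singleton]

theorem le_leafCount_starGraph (r : V) : Nat.card V - 1 ≤ leafCount (starGraph r) := by
  calc Nat.card V - 1 = ({r}ᶜ : Set V).ncard := by rw [Set.ncard_compl, Set.ncard_singleton]
    _ ≤ leafCount (starGraph r) := by
      refine Set.ncard_le_ncard (fun v hv => ?_) (Set.toFinite _)
      have hnbr : (starGraph r).neighborSet v = {r} := by
        ext w
        simp only [mem_neighborSet, starGraph_adj, Set.mem_singleton_iff]
        grind
      show ((starGraph r).neighborSet v).ncard = 1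
      rw [hnbr, Set.ncard_singleton]

theorem maxLeaves_eq_of_isUniversal {G : SimpleGraph V} {r : V} (hr : G.IsUniversal r)
    (hV : Nat.card V ≠ 2) : maxLeaves G = Nat.card V - 1 := by
  have hstar := hr.starGraph_le
  refine csSup_eq_of_forall_le_of_forall_lt_exists_gt
    ⟨_, starGraph r, hstar, isTree_starGraph r, rfl⟩ ?_ ?_
  · rintro _ ⟨T, -, hT, rfl⟩
    exact hT.leafCount_le hV
  · exact fun w hw => ⟨_, ⟨starGraph r, hstar, isTree_starGraph r, rfl⟩,
      hw.trans_le (le_leafCount_starGraph r)⟩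

end Leaves

section Wheel

variable {k : ℕ}

def wheelSpoke (i : Fin k) : Sym2 (Option (Fin k)) := s(none, some i)

def wheelRim [NeZero k] (i : Fin k) : Sym2 (Option (Fin k)) := s(some i, some (i + 1))

def wheelEdge [NeZero k] : Fin k ⊕ Fin k → Sym2 (Option (Fin k)) := Sum.elim wheelSpoke wheelRim

theorem wheel_isUniversal_none : (wheel k).IsUniversal none := by
  rintro (_ | i) h
  exacts [absurd rfl h, trivial]

theorem wheel_adj_some_some [NeZero k] (hk : 2 ≤ k) {i j : Fin k} :
    (wheel k).Adj (some i) (some j) ↔ j = i + 1 ∨ i = j + 1 := by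
  have hval : ∀ a : Fin k, ((a + 1 : Fin k) : ℕ) = ((a : ℕ) + 1) % k := fun a => by
    rw [Fin.val_add, Fin.val_one', Nat.mod_eq_of_lt (a := 1) (by omega)]
  have h1 : (1 : Fin k) ≠ 0 := by simp [Fin.ext_iff, Nat.mod_eq_of_lt (show 1 < k by omega)]
  show (i ≠ j ∧ _) ↔ _
  constructor
  · rintro ⟨-, h | h⟩
    exacts [Or.inl (Fin.ext (by rw [hval, h])), Or.inr (Fin.ext (by rw [hval, h]))]
  · rintro (rfl | rfl)
    · exact ⟨fun h => h1 (add_eq_left.mp h.symm), Or.inl (hval i).symm⟩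
    · exact ⟨fun h => h1 (add_eq_left.mp h), Or.inr (hval j).symm⟩

theorem wheel_not_adj_some_add_two [NeZero k] (hk : 4 ≤ k) (i : Fin k) :
    some i ≠ some (i + 1 + 1) ∧ ¬ (wheel k).Adj (some i) (some (i + 1 + 1)) := by
  have hmod : ∀ c < k, c % k = c := fun c => Nat.mod_eq_of_lt
  have h1 : (1 : Fin k) ≠ 0 := by simp [Fin.ext_iff, hmod 1 (by omega)]
  have h2 : (1 + 1 : Fin k) ≠ 0 := by
    simp [Fin.ext_iff, Fin.val_add, hmod 1 (by omega), hmod 2 (by omega)]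
  have h3 : (1 + 1 + 1 : Fin k) ≠ 0 := by
    simp [Fin.ext_iff, Fin.val_add, hmod 1 (by omega), hmod 2 (by omega), hmod 3 (by omega)]
  refine ⟨fun h => h2 ?_, ?_⟩
  · rw [Option.some_inj, add_assoc, left_eq_add] at h
    exact h
  · rw [wheel_adj_some_some (by omega)]
    rintro (h | h)
    · exact h1 (add_eq_left.mp (add_right_cancel h))
    · rw [add_assoc, add_assoc, left_eq_add] at h
      exact h3 (by rwa [← add_assoc] at h)

theorem wheelEdge_injective [NeZero k] (hk : 3 ≤ k) : Injective (wheelEdge (k := k)) := by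
  have h2 : (1 + 1 : Fin k) ≠ 0 := by
    simp [Fin.ext_iff, Fin.val_add, Nat.mod_eq_of_lt (show 1 < k by omega),
      Nat.mod_eq_of_lt (show 2 < k by omega)]
  refine Injective.sumElim (fun i j h => by simpa [wheelSpoke] using h) (fun i j h => ?_)
    (fun i j => by simp [wheelSpoke, wheelRim])
  simp only [wheelRim, Sym2.eq_iff, Option.some.injEq] at h
  obtain ⟨rfl, -⟩ | ⟨rfl, h⟩ := h
  · rfl
  · rw [add_assoc, add_eq_left] at h
    exact absurd h h2

theorem range_wheelEdge [NeZero k] (hk : 2 ≤ k) : Set.range wheelEdge = (wheel k).edgeSet := by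
  ext e
  induction e using Sym2.ind with
  | _ u v =>
  constructor
  · rintro ⟨i | i, hi⟩ <;> rw [← hi]
    · exact wheel_isUniversal_none (Option.some_ne_none i).symm
    · exact (wheel_adj_some_some hk).mpr (Or.inl rfl)
  · intro huv
    rw [mem_edgeSet] at huv
    match u, v, huv with
    | none, some j, _ => exact ⟨.inl j, rfl⟩
    | some i, none, _ => exact ⟨.inl i, Sym2.eq_swap⟩
    | some i, some j, h =>
      obtain rfl | rfl := (wheel_adj_some_some hk).mp h
      exacts [⟨.inr i, rfl⟩, ⟨.inr j, Sym2.eq_swap⟩]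

theorem ncard_edgeSet_wheel [NeZero k] (hk : 3 ≤ k) : (wheel k).edgeSet.ncard = 2 * k := by
  rw [← range_wheelEdge (by omega), Set.ncard_range_of_injective (wheelEdge_injective hk)]
  simp [two_mul]

end Wheel

section UpperBound

variable {k : ℕ} [NeZero k] {vcol : Option (Fin k) → ℕ} {ecol : Sym2 (Option (Fin k)) → ℕ}

theorem IsTMCColoring.wheel_color_coincidence (hk : 4 ≤ k)
    (h : IsTMCColoring (wheel k) vcol ecol) (i : Fin k) :
    ecol (wheelSpoke i) = vcol none ∨ ecol (wheelRim i) = vcol (some (i + 1)) ∨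
      ecol (wheelRim (i - 1)) = vcol (some (i - 1)) := by
  obtain ⟨hne, hnadj⟩ := wheel_not_adj_some_add_two hk i
  obtain ⟨_ | j, hadj, hcol⟩ := h.exists_adj_ecol_eq_vcol hne hnadj
  · rw [wheelSpoke, Sym2.eq_swap]
    exact Or.inl hcol
  · obtain rfl | rfl := (wheel_adj_some_some (by omega)).mp hadj
    · exact Or.inr (Or.inl hcol)
    · refine Or.inr (Or.inr ?_)
      rw [add_sub_cancel_right, wheelRim, Sym2.eq_swap]
      exact hcol

/- The vertices and edges of the wheel are `inl v`, `inr (inl i)` (the spoke at `i`) and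
`inr (inr j)` (the rim edge `e_j = {j, j + 1}`); `wheelNext` sends spokes to the hub and runs
around the rim as `v_j → e_j → v_{j+1}`. -/
def wheelNext : Option (Fin k) ⊕ (Fin k ⊕ Fin k) → Option (Fin k) ⊕ (Fin k ⊕ Fin k)
  | .inl none => .inl none
  | .inl (some j) => .inr (.inr j)
  | .inr (.inl _) => .inl none
  | .inr (.inr j) => .inl (some (j + 1))

/- For each rim vertex `i`, the element of the first coincidence of
`IsTMCColoring.wheel_color_coincidence` that holds, taken so that `wheelNext` points to its
partner. -/
open Classical in
noncomputable def wheelRepeat (vcol : Option (Fin k) → ℕ) (ecol : Sym2 (Option (Fin k)) → ℕ)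
    (i : Fin k) : Option (Fin k) ⊕ (Fin k ⊕ Fin k) :=
  if ecol (wheelSpoke i) = vcol none then .inr (.inl i)
  else if ecol (wheelRim i) = vcol (some (i + 1)) then .inr (.inr i)
  else .inl (some (i - 1))

theorem wheelRepeat_injective : Injective (wheelRepeat vcol ecol) := by
  intro i j h
  unfold wheelRepeat at h
  split_ifs at h <;> simp_all

theorem wheelRepeat_ne_inl_none (i : Fin k) : wheelRepeat vcol ecol i ≠ .inl none := by
  unfold wheelRepeat
  split_ifs <;> simp

theorem eq_add_one_of_wheelRepeat_eq_inl_some {i j : Fin k}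
    (h : wheelRepeat vcol ecol i = .inl (some j)) : i = j + 1 := by
  unfold wheelRepeat at h
  split_ifs at h
  exact sub_eq_iff_eq_add.mp (Option.some_injective _ (Sum.inl_injective h))

theorem eq_of_wheelRepeat_eq_inr_inr {i j : Fin k}
    (h : wheelRepeat vcol ecol i = .inr (.inr j)) : i = j := by
  unfold wheelRepeat at h
  split_ifs at h <;> cases h
  rfl

theorem IsTMCColoring.color_wheelNext_wheelRepeat (hk : 4 ≤ k)
    (h : IsTMCColoring (wheel k) vcol ecol) (i : Fin k) :
    Sum.elim vcol (ecol ∘ wheelEdge) (wheelNext (wheelRepeat vcol ecol i)) =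
      Sum.elim vcol (ecol ∘ wheelEdge) (wheelRepeat vcol ecol i) := by
  unfold wheelRepeat
  split_ifs with hA hB
  · exact hA.symm
  · exact hB.symm
  · exact ((h.wheel_color_coincidence hk i).resolve_left hA).resolve_left hB

theorem exists_iterate_wheelNext_notMem (x : Option (Fin k) ⊕ (Fin k ⊕ Fin k)) :
    ∃ m, wheelNext^[m] x ∉ Set.range (wheelRepeat vcol ecol) := by
  have hub : Sum.inl none ∉ Set.range (wheelRepeat vcol ecol) :=
    fun ⟨i, hi⟩ => wheelRepeat_ne_inl_none i hi
  have hvertex : ∀ j : Fin k,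
      ∃ m, wheelNext^[m] (.inl (some j)) ∉ Set.range (wheelRepeat vcol ecol) := by
    intro j
    by_cases hj : Sum.inl (some j) ∈ Set.range (wheelRepeat vcol ecol)
    -- `v_j` is only chosen by `i = j + 1`, which then does not choose `e_{j+1}`
    · obtain ⟨i, hi⟩ := hj
      refine ⟨3, ?_⟩
      change Sum.inr (Sum.inr (j + 1)) ∉ _
      rintro ⟨i', hi'⟩
      rw [eq_of_wheelRepeat_eq_inr_inr hi', ← eq_add_one_of_wheelRepeat_eq_inl_some hi, hi] at hi'
      cases hi'
    · exact ⟨0, hj⟩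
  rcases x with (_ | j) | (i | j)
  · exact ⟨0, hub⟩
  · exact hvertex j
  · exact ⟨1, hub⟩
  · obtain ⟨m, hm⟩ := hvertex (j + 1)
    exact ⟨m + 1, hm⟩

theorem IsTMCColoring.totalColorsUsed_wheel_le (hk : 4 ≤ k)
    (h : IsTMCColoring (wheel k) vcol ecol) :
    totalColorsUsed (wheel k) vcol ecol ≤ 2 * k + 1 := by
  have hcount := ncard_range_add_card_le_of_iterate_notMem
    (f := Sum.elim vcol (ecol ∘ wheelEdge)) wheelRepeat_injective
    (h.color_wheelNext_wheelRepeat hk) exists_iterate_wheelNext_notMem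
  rw [Set.Sum.elim_range, Set.range_comp, range_wheelEdge (by omega)] at hcount
  simp only [Nat.card_eq_fintype_card, Fintype.card_sum, Fintype.card_option,
    Fintype.card_fin] at hcount
  rw [totalColorsUsed]
  omega

end UpperBound

section LowerBound

variable (k : ℕ) [NeZero k]

def wheelVcol : Option (Fin k) → ℕ
  | none => 0
  | some i => i + 1

open Classical in
noncomputable def wheelEcol (e : Sym2 (Option (Fin k))) : ℕ :=
  if e ∈ Set.range wheelRim then k + 1 + invFun wheelRim e else 0

theorem isTMCColoring_wheelVcol_wheelEcol :
    IsTMCColoring (wheel k) (wheelVcol k) (wheelEcol k) :=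
  isTMCColoring_of_isUniversal wheel_isUniversal_none (c := 0) rfl fun v => by
    rw [wheelEcol, if_neg]
    rintro ⟨i, hi⟩
    cases v <;> simp [wheelRim] at hi

variable {k}

theorem le_totalColorsUsed_wheelVcol_wheelEcol (hk : 3 ≤ k) :
    2 * k + 1 ≤ totalColorsUsed (wheel k) (wheelVcol k) (wheelEcol k) := by
  have hrim : ∀ i : Fin k, wheelEcol k (wheelRim i) = k + 1 + i := fun i => by
    have hinj : Injective (wheelRim (k := k)) := (wheelEdge_injective hk).comp Sum.inr_injective
    rw [wheelEcol, if_pos ⟨i, rfl⟩, leftInverse_invFun hinj i]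
  set g : Option (Fin k) ⊕ Fin k → ℕ := Sum.elim (wheelVcol k) (wheelEcol k ∘ wheelRim)
  have hinj : Injective g := by
    refine Injective.sumElim ?_ ?_ ?_
    · rintro (_ | i) (_ | j) h <;> simp only [wheelVcol] at h
      · rfl
      · omega
      · omega
      · exact congrArg some (Fin.ext (by omega))
    · intro i j h
      simpa [hrim, Fin.ext_iff] using h
    · rintro (_ | i) j <;> simp only [wheelVcol, comp_apply, hrim] <;> omega
  have hsub : Set.range g ⊆ Set.range (wheelVcol k) ∪ wheelEcol k '' (wheel k).edgeSet := by
    rw [Set.Sum.elim_range, Set.range_comp, ← range_wheelEdge (by omega)]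
    exact Set.union_subset_union_right _
      (Set.image_mono (by rintro _ ⟨i, rfl⟩; exact ⟨.inr i, rfl⟩))
  calc 2 * k + 1 = (Set.range g).ncard := by
        rw [Set.ncard_range_of_injective hinj, Nat.card_eq_fintype_card, Fintype.card_sum,
          Fintype.card_option, Fintype.card_fin]
        ring
    _ ≤ totalColorsUsed (wheel k) (wheelVcol k) (wheelEcol k) :=
        Set.ncard_le_ncard hsub (Set.toFinite _)

theorem tmc_wheel (hk : 4 ≤ k) : tmc (wheel k) = 2 * k + 1 :=
  tmc_eq_of_forall_le (fun _ _ h => h.totalColorsUsed_wheel_le hk)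
    (isTMCColoring_wheelVcol_wheelEcol k) (le_totalColorsUsed_wheelVcol_wheelEcol (by omega))

end LowerBound

/-- For the wheel `G = W_{n-1}` of order `n ≥ 5`, `tmc(G) = m - n + 2 + l(G)`. -/
theorem stmt_6 (n : ℕ) (hn : 5 ≤ n) :
    (tmc (wheel (n - 1)) : ℤ) =
      ((wheel (n - 1)).edgeSet.ncard : ℤ) - n + 2 + maxLeaves (wheel (n - 1)) := by
  have : NeZero (n - 1) := ⟨by omega⟩
  have hcard : Nat.card (Option (Fin (n - 1))) = n := by
    rw [Nat.card_eq_fintype_card, Fintype.card_option, Fintype.card_fin]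
    omega
  rw [tmc_wheel (by omega), ncard_edgeSet_wheel (by omega),
    maxLeaves_eq_of_isUniversal wheel_isUniversal_none (by omega), hcard]
  omega
end

section
/- Let G be a connected graph of order n > 3 with m edges and maximum degree Δ(G) satisfying Δ(G) < n − (2m − 3(n−1))/(n−3). Then tmc(G) = m − n + 2 + l(G). -/
open SimpleGraph

/-!
A spanning tree with `l(G)` leaves yields a TMC-coloring with `m - n + 2 + l(G)` colors.
Conversely, at most `l(G)` vertex colors of a TMC-coloring avoid the edge colors, and the edge
coloring alone joins any two vertices by a monochromatic path, so under the degree condition it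
has at most `m - n + 2` colors. For the latter, let `W = ∑ (a_C - 2)` (`colorWaste`), summed
over the components of all color classes, `a_C` being the number of vertices of `C`. A color
class with `k` edges contributes less than `k`, so more colors would force `W ≤ n - 3`. Every
non-adjacent pair lies in a common monochromatic component and every component has `a_C ≤ Δ`,
so counting non-adjacent ordered pairs gives
`n(n-1) - 2m ≤ ∑ (a_C - 1)(a_C - 2) ≤ (Δ - 1) W ≤ (Δ - 1)(n - 3)`, against the degree condition.
-/

open Finset

namespace SimpleGraph

variable {V : Type*}

section ColorClass

variable {α : Type*} (G : SimpleGraph V) (ecol : Sym2 V → α)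

def colorClass (c : α) : SimpleGraph V where
  Adj x y := G.Adj x y ∧ ecol s(x, y) = c
  symm := ⟨fun x _ h => ⟨h.1.symm, Sym2.eq_swap (a := x) ▸ h.2⟩⟩
  loopless := ⟨fun _ h => h.1.ne rfl⟩

instance [DecidableRel G.Adj] [DecidableEq α] (c : α) : DecidableRel (G.colorClass ecol c).Adj :=
  fun x y => inferInstanceAs (Decidable (G.Adj x y ∧ ecol s(x, y) = c))

theorem colorClass_le (c : α) : G.colorClass ecol c ≤ G := fun _ _ h => h.1

end ColorClass

theorem Walk.IsPath.one_lt_ncard_neighborSet [Finite V] {G : SimpleGraph V} {u v w : V}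
    {p : G.Walk u v} (hp : p.IsPath) (hw : w ∈ p.support) (hwu : w ≠ u) (hwv : w ≠ v) :
    1 < (G.neighborSet w).ncard := by
  obtain ⟨i, rfl, hi⟩ := Walk.mem_support_iff_exists_getVert.1 hw
  have hi0 : i ≠ 0 := by rintro rfl; simp at hwu
  have hil : i < p.length := lt_of_le_of_ne hi (by rintro rfl; simp at hwv)
  calc 1 < (p.toSubgraph.neighborSet (p.getVert i)).ncard := by
        rw [hp.ncard_neighborSet_toSubgraph_internal_eq_two hi0 hil]; exact one_lt_two
    _ ≤ (G.neighborSet (p.getVert i)).ncard :=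
        Set.ncard_le_ncard (p.toSubgraph.neighborSet_subset _) (Set.toFinite _)

/-- Take a spanning tree of the edges inside `S` together with one edge from each outside vertex
into `S`. -/
theorem exists_isTree_le_forall_notMem_ncard_neighborSet_eq_one {G : SimpleGraph V} {S : Set V}
    (hne : S.Nonempty)
    (hS : ∀ s ∈ S, ∀ t ∈ S, ∃ p : G.Walk s t, ∀ w ∈ p.support, w ∈ S)
    (hdom : ∀ x ∉ S, ∃ y ∈ S, G.Adj x y) :
    ∃ T ≤ G, T.IsTree ∧ ∀ x ∉ S, (T.neighborSet x).ncard = 1 := by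
  choose! ν hνS hνadj using hdom
  let r x y := G.Adj x y ∧ (x ∈ S ∧ y ∈ S ∨ x ∉ S ∧ y = ν x)
  let H := fromRel r
  have hHG : H ≤ G := fun x y h => by
    rcases h.2 with h | h
    exacts [h.1, h.1.symm]
  have hHS : ∀ s ∈ S, ∀ t ∈ S, H.Reachable s t := fun s hs t ht => by
    obtain ⟨p, hp⟩ := hS s hs t ht
    refine ⟨p.transfer H fun e he => ?_⟩
    induction e using Sym2.ind with
    | _ a b =>
      have hab := p.adj_of_mem_edges he
      exact (fromRel_adj r a b).2 ⟨hab.ne, Or.inl ⟨hab, Or.inl ⟨hp a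
        (p.fst_mem_support_of_mem_edges he), hp b (p.snd_mem_support_of_mem_edges he)⟩⟩⟩
  have hν : ∀ x ∉ S, H.Adj x (ν x) := fun x hx =>
    (fromRel_adj r x (ν x)).2
      ⟨fun h => hx (h ▸ hνS x hx), Or.inl ⟨hνadj x hx, Or.inr ⟨hx, rfl⟩⟩⟩
  have hH : H.Connected := by
    obtain ⟨s₀, hs₀⟩ := hne
    refine (connected_iff_exists_forall_reachable H).2 ⟨s₀, fun x => ?_⟩
    by_cases hx : x ∈ S
    · exact hHS _ hs₀ _ hx
    · exact (hHS _ hs₀ _ (hνS x hx)).trans (hν x hx).reachable.symm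
  obtain ⟨T, hTH, hT⟩ := hH.exists_isTree_le
  refine ⟨T, hTH.trans hHG, hT, fun x hx => Set.ncard_eq_one.2 ⟨ν x, ?_⟩⟩
  refine Set.eq_singleton_iff_nonempty_unique_mem.2 ⟨?_, fun y hy => ?_⟩
  · obtain ⟨p, -⟩ := hT.connected.exists_isPath x (ν x)
    exact ⟨_, p.adj_snd (Walk.not_nil_of_ne (hν x hx).ne)⟩
  · rcases ((fromRel_adj r x y).1 (hTH hy)).2 with
      ⟨-, ⟨hxS, -⟩ | ⟨-, rfl⟩⟩ | ⟨-, ⟨-, hxS⟩ | ⟨hyS, rfl⟩⟩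
    · exact absurd hxS hx
    · rfl
    · exact absurd hxS hx
    · exact absurd (hνS y hyS) hx

variable [Fintype V] [DecidableEq V]

section Degree

variable (G : SimpleGraph V) [DecidableRel G.Adj]

theorem degree_add_degree_compl (v : V) : G.degree v + Gᶜ.degree v + 1 = Fintype.card V := by
  have := G.degree_lt_card_verts v
  rw [degree_compl]
  omega

theorem sum_degree_compl_add_two_mul_card_edgeFinset :
    ∑ v, Gᶜ.degree v + 2 * #G.edgeFinset = Fintype.card V * (Fintype.card V - 1) := by
  have := Finset.sum_congr rfl fun v (_ : v ∈ univ) => G.degree_add_degree_compl v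
  rw [Finset.sum_add_distrib, Finset.sum_add_distrib, sum_degrees_eq_twice_card_edges] at this
  simp only [sum_const, card_univ, smul_eq_mul, mul_one] at this
  rw [Nat.mul_sub_one]
  omega

end Degree

section Components

variable {G H : SimpleGraph V} [DecidableRel G.Adj] [DecidableRel H.Adj]

theorem ConnectedComponent.sum_sum_supp_toFinset {M : Type*} [AddCommMonoid M] (f : V → M) :
    ∑ C : H.ConnectedComponent, ∑ v ∈ C.supp.toFinset, f v = ∑ v, f v := by
  classical
  rw [← Finset.sum_fiberwise univ H.connectedComponentMk f]
  congr! with C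
  ext v
  simp

theorem ConnectedComponent.two_mul_card_sub_one_le_sum_degree (C : H.ConnectedComponent) :
    2 * (#C.supp.toFinset - 1) ≤ ∑ v ∈ C.supp.toFinset, H.degree v := by
  classical
  have hconn : (H.induce C.supp).Connected := C.connected_toSimpleGraph
  have hcard := hconn.card_vert_le_card_edgeSet_add_one
  have hdeg (v : C.supp) : (H.induce C.supp).degree v = H.degree v :=
    degree_induce_of_neighborSet_subset fun w hw => C.mem_supp_of_adj_mem_supp v.2 hw
  have hsum := (H.induce C.supp).sum_degrees_eq_twice_card_edges
  simp only [hdeg] at hsum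
  rw [← Finset.sum_set_coe, hsum]
  rw [Nat.card_eq_card_toFinset, Nat.card_eq_fintype_card, ← edgeFinset_card] at hcard
  omega

theorem sum_card_supp_sub_one_le_card_edgeFinset :
    ∑ C : H.ConnectedComponent, (#C.supp.toFinset - 1) ≤ #H.edgeFinset := by
  have : ∑ C : H.ConnectedComponent, 2 * (#C.supp.toFinset - 1) ≤
      ∑ C : H.ConnectedComponent, ∑ v ∈ C.supp.toFinset, H.degree v :=
    Finset.sum_le_sum fun C _ => C.two_mul_card_sub_one_le_sum_degree
  rw [← Finset.mul_sum, ConnectedComponent.sum_sum_supp_toFinset,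
    sum_degrees_eq_twice_card_edges] at this
  omega

theorem sum_card_supp_sub_two_lt_card_edgeFinset {x y : V} (hxy : H.Adj x y) :
    ∑ C : H.ConnectedComponent, (#C.supp.toFinset - 2) < #H.edgeFinset := by
  have hx : 1 < #(H.connectedComponentMk x).supp.toFinset :=
    Finset.one_lt_card.2 ⟨x, by simp, y,
      by simpa using (ConnectedComponent.connectedComponentMk_eq_of_adj hxy).symm, hxy.ne⟩
  refine lt_of_lt_of_le (Finset.sum_lt_sum (fun C _ => by omega)
    ⟨H.connectedComponentMk x, mem_univ _, by omega⟩) sum_card_supp_sub_one_le_card_edgeFinset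

theorem ConnectedComponent.card_compl_neighborFinset_inter_add_degree_lt (hHG : H ≤ G)
    (C : H.ConnectedComponent) {v : V} (hv : v ∈ C.supp) :
    #(Gᶜ.neighborFinset v ∩ C.supp.toFinset) + H.degree v < #C.supp.toFinset := by
  have hsub : insert v (H.neighborFinset v ∪ (Gᶜ.neighborFinset v ∩ C.supp.toFinset)) ⊆
      C.supp.toFinset := by
    intro w hw
    simp only [mem_insert, mem_union, mem_neighborFinset, mem_inter] at hw
    rcases hw with rfl | hw | hw
    · simpa using hv
    · simpa using C.mem_supp_of_adj_mem_supp hv hw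
    · exact hw.2
  have hdisj : Disjoint (H.neighborFinset v) (Gᶜ.neighborFinset v ∩ C.supp.toFinset) := by
    refine Finset.disjoint_left.2 fun w hw hw' => ?_
    simp only [mem_neighborFinset, mem_inter, compl_adj] at hw hw'
    exact hw'.1.2 (hHG hw)
  have hv' : v ∉ H.neighborFinset v ∪ (Gᶜ.neighborFinset v ∩ C.supp.toFinset) := by
    simp
  have := Finset.card_le_card hsub
  rw [card_insert_of_notMem hv', card_union_of_disjoint hdisj,
    card_neighborFinset_eq_degree] at this
  omega

theorem ConnectedComponent.card_compl_neighborFinset_inter_le (hHG : H ≤ G)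
    (C : H.ConnectedComponent) {v : V} (hv : v ∈ C.supp) :
    #(Gᶜ.neighborFinset v ∩ C.supp.toFinset) ≤ #C.supp.toFinset - 2 := by
  have := C.card_compl_neighborFinset_inter_add_degree_lt hHG hv
  rcases (Gᶜ.neighborFinset v ∩ C.supp.toFinset).eq_empty_or_nonempty with hempty | ⟨u, hu⟩
  · simp [hempty]
  · simp only [mem_inter, mem_neighborFinset, compl_adj, Set.mem_toFinset] at hu
    obtain ⟨p⟩ := C.reachable_of_mem_supp hv hu.2
    have : 0 < H.degree v :=
      H.degree_pos_iff_exists_adj v |>.2 ⟨_, p.adj_snd (Walk.not_nil_of_ne hu.1.1)⟩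
    omega

theorem ConnectedComponent.sum_card_compl_neighborFinset_inter_le (hHG : H ≤ G)
    (C : H.ConnectedComponent) :
    ∑ v ∈ C.supp.toFinset, #(Gᶜ.neighborFinset v ∩ C.supp.toFinset) ≤
      (#C.supp.toFinset - 1) * (#C.supp.toFinset - 2) := by
  have hpt :
      ∑ v ∈ C.supp.toFinset, (#(Gᶜ.neighborFinset v ∩ C.supp.toFinset) + H.degree v + 1) ≤
        ∑ v ∈ C.supp.toFinset, #C.supp.toFinset := Finset.sum_le_sum fun v hv =>
      C.card_compl_neighborFinset_inter_add_degree_lt hHG (Set.mem_toFinset.1 hv)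
  rw [Finset.sum_add_distrib, Finset.sum_add_distrib, Finset.sum_const, Finset.sum_const,
    smul_eq_mul, smul_eq_mul] at hpt
  have hdeg := C.two_mul_card_sub_one_le_sum_degree
  generalize #C.supp.toFinset = a at hpt hdeg ⊢
  obtain _ | _ | k := a
  · omega
  · omega
  · rw [show k + 1 + 1 - 1 = k + 1 by omega, show k + 1 + 1 - 2 = k by omega] at *
    nlinarith

end Components

section ColorWaste

variable {α : Type*} (G : SimpleGraph V) [DecidableRel G.Adj] (ecol : Sym2 V → α)
  [DecidableEq α]

omit [DecidableEq V] in
theorem edgeFinset_colorClass (c : α) :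
    (G.colorClass ecol c).edgeFinset = {e ∈ G.edgeFinset | ecol e = c} := by
  ext e
  induction e using Sym2.ind
  rw [mem_filter, mem_edgeFinset, mem_edgeFinset]
  rfl

omit [DecidableEq V] in
theorem sum_card_edgeFinset_colorClass :
    ∑ c ∈ G.edgeFinset.image ecol, #(G.colorClass ecol c).edgeFinset = #G.edgeFinset := by
  simp_rw [edgeFinset_colorClass]
  exact (card_eq_sum_card_image ecol _).symm

def colorWaste : ℕ :=
  ∑ c ∈ G.edgeFinset.image ecol,
    ∑ C : (G.colorClass ecol c).ConnectedComponent, (#C.supp.toFinset - 2)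

theorem colorWaste_add_card_image_le :
    colorWaste G ecol + #(G.edgeFinset.image ecol) ≤ #G.edgeFinset := by
  rw [colorWaste, ← sum_card_edgeFinset_colorClass G ecol, card_eq_sum_ones, ← sum_add_distrib]
  refine sum_le_sum fun c hc => ?_
  obtain ⟨e, he, rfl⟩ := mem_image.1 hc
  induction e using Sym2.ind with
  | _ x y =>
    exact sum_card_supp_sub_two_lt_card_edgeFinset (x := x) (y := y) ⟨mem_edgeFinset.1 he, rfl⟩

theorem sum_card_supp_sub_two_add_le_colorWaste {c : α} (hc : c ∈ G.edgeFinset.image ecol)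
    {C : (G.colorClass ecol c).ConnectedComponent} {v : V} (hv : v ∉ C.supp) :
    ∑ c ∈ G.edgeFinset.image ecol,
        (#((G.colorClass ecol c).connectedComponentMk v).supp.toFinset - 2) +
      (#C.supp.toFinset - 2) ≤ colorWaste G ecol := by
  classical
  rw [colorWaste, ← add_sum_erase _ _ hc, ← add_sum_erase _ _ hc, add_right_comm]
  gcongr with c' hc'
  · rw [← sum_pair (f := fun C' => #C'.supp.toFinset - 2) hv]
    exact sum_le_sum_of_subset (subset_univ _)
  · exact single_le_sum_of_canonicallyOrdered
      (f := fun C' : (G.colorClass ecol c').ConnectedComponent => #C'.supp.toFinset - 2)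
      (mem_univ _)

end ColorWaste

end SimpleGraph

section MCColoring

variable {V : Type*} [Fintype V] [DecidableEq V] {G : SimpleGraph V} [DecidableRel G.Adj]
  {ecol : Sym2 V → ℕ}

omit [DecidableEq V] in
theorem IsMCColoring.exists_reachable_colorClass (h : IsMCColoring G ecol) {u v : V}
    (huv : u ≠ v) : ∃ c ∈ G.edgeFinset.image ecol, (G.colorClass ecol c).Reachable u v := by
  obtain ⟨p, -, c, hc⟩ := h u v
  have hp : ¬p.Nil := Walk.not_nil_of_ne huv
  refine ⟨c, ?_, ⟨p.transfer _ fun e he => ?_⟩⟩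
  · rw [← hc _ (p.mk_start_snd_mem_edges hp)]
    exact mem_image_of_mem _ (mem_edgeFinset.2 (p.adj_snd hp))
  · induction e using Sym2.ind
    exact ⟨p.edges_subset_edgeSet he, hc _ he⟩

theorem IsMCColoring.degree_compl_le_sum (h : IsMCColoring G ecol) (v : V) :
    Gᶜ.degree v ≤ ∑ c ∈ G.edgeFinset.image ecol, #(Gᶜ.neighborFinset v ∩
      ((G.colorClass ecol c).connectedComponentMk v).supp.toFinset) := by
  rw [← card_neighborFinset_eq_degree]
  refine (card_le_card fun u hu => ?_).trans card_biUnion_le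
  obtain ⟨c, hc, hr⟩ :=
    h.exists_reachable_colorClass ((compl_adj G v u).1 ((mem_neighborFinset _ _ _).1 hu)).1
  exact mem_biUnion.2
    ⟨c, hc, mem_inter.2 ⟨hu, by simpa using (ConnectedComponent.eq.2 hr).symm⟩⟩

/-- A vertex `v` outside `C` has all its non-neighbours in its own components of the color
classes, which waste at most `colorWaste - (#C - 2)`; so `v` has at most `n - 1 - #C`
non-neighbours. -/
theorem IsMCColoring.card_supp_le_maxDegree (h : IsMCColoring G ecol)
    (hW : colorWaste G ecol + 3 ≤ Fintype.card V) {c : ℕ} (hc : c ∈ G.edgeFinset.image ecol)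
    (C : (G.colorClass ecol c).ConnectedComponent) (hC : 3 ≤ #C.supp.toFinset) :
    #C.supp.toFinset ≤ G.maxDegree := by
  obtain ⟨v, hv⟩ : ∃ v, v ∉ C.supp := by
    by_contra! hall
    have hcard : #C.supp.toFinset = Fintype.card V := by
      rw [← card_univ]; congr; ext v; simpa using hall v
    have : #C.supp.toFinset - 2 ≤ colorWaste G ecol :=
      (single_le_sum_of_canonicallyOrdered (mem_univ C)).trans
        (single_le_sum_of_canonicallyOrdered
          (f := fun c => ∑ C : (G.colorClass ecol c).ConnectedComponent,
            (#C.supp.toFinset - 2)) hc)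
    omega
  have hsum := h.degree_compl_le_sum v
  have hterm := sum_le_sum fun c' (_ : c' ∈ G.edgeFinset.image ecol) =>
    ((G.colorClass ecol c').connectedComponentMk v).card_compl_neighborFinset_inter_le
      (colorClass_le G ecol c') ConnectedComponent.connectedComponentMk_mem
  have hW' := sum_card_supp_sub_two_add_le_colorWaste G ecol hc hv
  have := G.degree_add_degree_compl v
  have := G.degree_le_maxDegree v
  omega

theorem IsMCColoring.sum_degree_compl_le (h : IsMCColoring G ecol)
    (hW : colorWaste G ecol + 3 ≤ Fintype.card V) :
    ∑ v, Gᶜ.degree v ≤ (G.maxDegree - 1) * colorWaste G ecol := by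
  calc ∑ v, Gᶜ.degree v
      ≤ ∑ v, ∑ c ∈ G.edgeFinset.image ecol, #(Gᶜ.neighborFinset v ∩
          ((G.colorClass ecol c).connectedComponentMk v).supp.toFinset) :=
        sum_le_sum fun v _ => h.degree_compl_le_sum v
    _ = ∑ c ∈ G.edgeFinset.image ecol, ∑ C : (G.colorClass ecol c).ConnectedComponent,
          ∑ v ∈ C.supp.toFinset, #(Gᶜ.neighborFinset v ∩ C.supp.toFinset) := by
        rw [sum_comm]
        refine sum_congr rfl fun c _ => ?_
        rw [← ConnectedComponent.sum_sum_supp_toFinset (H := G.colorClass ecol c)]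
        refine sum_congr rfl fun C _ => sum_congr rfl fun v hv => ?_
        rw [(ConnectedComponent.mem_supp_iff _ _).1 (Set.mem_toFinset.1 hv)]
    _ ≤ ∑ c ∈ G.edgeFinset.image ecol, ∑ C : (G.colorClass ecol c).ConnectedComponent,
          (#C.supp.toFinset - 1) * (#C.supp.toFinset - 2) :=
        sum_le_sum fun c _ => sum_le_sum fun C _ =>
          C.sum_card_compl_neighborFinset_inter_le (colorClass_le G ecol c)
    _ ≤ ∑ c ∈ G.edgeFinset.image ecol, ∑ C : (G.colorClass ecol c).ConnectedComponent,
          (G.maxDegree - 1) * (#C.supp.toFinset - 2) := by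
        refine sum_le_sum fun c hc => sum_le_sum fun C _ => ?_
        rcases le_or_gt 3 #C.supp.toFinset with hC | hC
        · have := h.card_supp_le_maxDegree hW hc C hC
          gcongr
        · rw [show #C.supp.toFinset - 2 = 0 by omega, mul_zero, mul_zero]
    _ = (G.maxDegree - 1) * colorWaste G ecol := by
        simp only [colorWaste, mul_sum]

/-- The bound `mc G ≤ m - n + 2` of Caro and Yuster. -/
theorem IsMCColoring.card_image_add_card_le (h : IsMCColoring G ecol)
    (hdeg : 2 * #G.edgeFinset + G.maxDegree * (Fintype.card V - 3) + 3 < Fintype.card V ^ 2) :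
    #(G.edgeFinset.image ecol) + Fintype.card V ≤ #G.edgeFinset + 2 := by
  by_contra! hlt
  have hW : colorWaste G ecol + 3 ≤ Fintype.card V := by
    have := colorWaste_add_card_image_le G ecol
    omega
  have hsum := h.sum_degree_compl_le hW
  have hid := G.sum_degree_compl_add_two_mul_card_edgeFinset
  generalize Fintype.card V = n at *
  obtain ⟨p, rfl⟩ : ∃ p, n = p + 3 := ⟨_, (Nat.sub_add_cancel (by omega)).symm⟩
  rw [Nat.add_sub_cancel] at hdeg
  rw [show p + 3 - 1 = p + 2 by omega] at hid
  rcases Nat.eq_zero_or_pos G.maxDegree with hΔ | hΔ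
  · rw [hΔ, Nat.zero_sub, zero_mul] at hsum
    rw [edgeFinset_eq_empty.2 (maxDegree_eq_zero_iff.1 hΔ), card_empty] at hid
    nlinarith
  · obtain ⟨d, hd⟩ : ∃ d, G.maxDegree = d + 1 := ⟨_, (Nat.sub_add_cancel hΔ).symm⟩
    rw [hd, Nat.add_sub_cancel] at hsum
    rw [hd] at hdeg
    nlinarith [Nat.mul_le_mul_left d (show colorWaste G ecol ≤ p by omega)]

end MCColoring

section TMCColoring

variable {V : Type*} {G : SimpleGraph V} {vcol : V → ℕ} {ecol : Sym2 V → ℕ}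

theorem IsTMCColoring.isMCColoring (h : IsTMCColoring G vcol ecol) : IsMCColoring G ecol :=
  fun u v => by
    obtain ⟨p, hp, c, he, -⟩ := h u v
    exact ⟨p, hp, c, he⟩

theorem IsTMCColoring.exists_adj_vcol_mem (h : IsTMCColoring G vcol ecol) {u v : V} (huv : u ≠ v)
    (hnadj : ¬G.Adj u v) : ∃ w, G.Adj u w ∧ vcol w ∈ ecol '' G.edgeSet := by
  obtain ⟨p, -, c, he, hv⟩ := h u v
  have hp : ¬p.Nil := Walk.not_nil_of_ne huv
  have hadj := p.adj_snd hp
  refine ⟨p.snd, hadj, ?_⟩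
  rw [hv _ (p.getVert_mem_support 1) hadj.ne' fun h => hnadj (h ▸ hadj),
    ← he _ (p.mk_start_snd_mem_edges hp)]
  exact ⟨_, hadj, rfl⟩

theorem IsTMCColoring.exists_walk_vcol_mem (h : IsTMCColoring G vcol ecol) {s t : V}
    (hs : vcol s ∈ ecol '' G.edgeSet) (ht : vcol t ∈ ecol '' G.edgeSet) :
    ∃ p : G.Walk s t, ∀ w ∈ p.support, vcol w ∈ ecol '' G.edgeSet := by
  rcases eq_or_ne s t with rfl | hst
  · exact ⟨Walk.nil, by simpa⟩
  obtain ⟨p, -, c, he, hv⟩ := h s t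
  have hp : ¬p.Nil := Walk.not_nil_of_ne hst
  refine ⟨p, fun w hw => ?_⟩
  by_cases hws : w = s
  · rwa [hws]
  by_cases hwt : w = t
  · rwa [hwt]
  rw [hv w hw hws hwt, ← he _ (p.mk_start_snd_mem_edges hp)]
  exact ⟨_, p.adj_snd hp, rfl⟩

/-- The vertices whose color is also an edge color form a connected dominating set. -/
theorem IsTMCColoring.exists_isTree_le_ncard_diff_le_leafCount [Finite V]
    (h : IsTMCColoring G vcol ecol) (hnc : ∃ u v, u ≠ v ∧ ¬G.Adj u v) :
    ∃ T ≤ G, T.IsTree ∧ (Set.range vcol \ ecol '' G.edgeSet).ncard ≤ leafCount T := by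
  set S := vcol ⁻¹' (ecol '' G.edgeSet)
  obtain ⟨u, v, huv, hnadj⟩ := hnc
  obtain ⟨s₀, -, hs₀⟩ := h.exists_adj_vcol_mem huv hnadj
  have hdom : ∀ x ∉ S, ∃ y ∈ S, G.Adj x y := by
    intro x hx
    by_cases hall : ∀ y, y ≠ x → G.Adj x y
    · exact ⟨s₀, hs₀, hall _ (ne_of_mem_of_not_mem hs₀ hx)⟩
    · push Not at hall
      obtain ⟨y, hyx, hy⟩ := hall
      obtain ⟨w, hw, hwS⟩ := h.exists_adj_vcol_mem hyx.symm hy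
      exact ⟨w, hwS, hw⟩
  obtain ⟨T, hTG, hT, hleaf⟩ := exists_isTree_le_forall_notMem_ncard_neighborSet_eq_one
    ⟨s₀, hs₀⟩ (fun s hs t ht => h.exists_walk_vcol_mem hs ht) hdom
  refine ⟨T, hTG, hT, ?_⟩
  calc (Set.range vcol \ ecol '' G.edgeSet).ncard = (vcol '' Sᶜ).ncard := by
        rw [Set.image_compl_preimage]
    _ ≤ Sᶜ.ncard := Set.ncard_image_le (Set.toFinite _)
    _ ≤ leafCount T := Set.ncard_le_ncard hleaf (Set.toFinite _)

theorem isTMCColoring_of_isTree [Finite V] {T : SimpleGraph V} (hTG : T ≤ G) (hT : T.IsTree)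
    (c : ℕ) (hvcol : ∀ v, (T.neighborSet v).ncard ≠ 1 → vcol v = c)
    (hecol : ∀ e ∈ T.edgeSet, ecol e = c) : IsTMCColoring G vcol ecol := by
  intro u v
  obtain ⟨p, hp⟩ := hT.connected.exists_isPath u v
  refine ⟨p.mapLe hTG, hp.mapLe hTG, c, fun e he => hecol e ?_, fun w hw hwu hwv => hvcol w ?_⟩
  · rw [Walk.edges_mapLe_eq_edges] at he
    exact p.edges_subset_edgeSet he
  · rw [Walk.support_mapLe_eq_support] at hw
    exact (hp.one_lt_ncard_neighborSet hw hwu hwv).ne'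

/-- Color the edges and inner vertices of a spanning tree `0`, and give every leaf and every
edge outside the tree its own color. -/
theorem exists_isTMCColoring_le_totalColorsUsed [Finite V] [Nontrivial V] {T : SimpleGraph V}
    (hTG : T ≤ G) (hT : T.IsTree) :
    ∃ vcol ecol, IsTMCColoring G vcol ecol ∧
      1 + leafCount T + (G.edgeSet \ T.edgeSet).ncard ≤ totalColorsUsed G vcol ecol := by
  classical
  obtain ⟨g, hg⟩ := Countable.exists_injective_nat (V ⊕ Sym2 V)
  set L := {v | (T.neighborSet v).ncard = 1}
  set N := G.edgeSet \ T.edgeSet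
  let vcol v := if v ∈ L then g (.inl v) + 1 else 0
  let ecol e := if e ∈ T.edgeSet then 0 else g (.inr e) + 1
  refine ⟨vcol, ecol,
    isTMCColoring_of_isTree hTG hT 0 (fun v hv => if_neg hv) (fun e he => if_pos he), ?_⟩
  have hsub : insert 0 ((g · + 1) '' (.inl '' L ∪ .inr '' N)) ⊆
      Set.range vcol ∪ ecol '' G.edgeSet := by
    rintro _ (rfl | ⟨_, ⟨v, hv, rfl⟩ | ⟨e, he, rfl⟩, rfl⟩)
    · obtain ⟨u, v, huv⟩ := exists_pair_ne V
      obtain ⟨p, -⟩ := hT.connected.exists_isPath u v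
      have hadj := p.adj_snd (Walk.not_nil_of_ne huv)
      exact Or.inr ⟨_, hTG hadj, if_pos (show s(u, p.snd) ∈ T.edgeSet from hadj)⟩
    · exact Or.inl ⟨v, if_pos hv⟩
    · exact Or.inr ⟨e, he.1, if_neg he.2⟩
  calc 1 + leafCount T + N.ncard = (insert 0 ((g · + 1) '' (.inl '' L ∪ .inr '' N))).ncard := by
        rw [Set.ncard_insert_of_notMem (by simp),
          Set.ncard_image_of_injective _ fun _ _ h => hg (Nat.succ_injective h),
          Set.ncard_union_eq Set.disjoint_image_inl_image_inr,
          Set.ncard_image_of_injective _ Sum.inl_injective,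
          Set.ncard_image_of_injective _ Sum.inr_injective]
        change 1 + L.ncard + N.ncard = _
        omega
    _ ≤ totalColorsUsed G vcol ecol := Set.ncard_le_ncard hsub (Set.toFinite _)

end TMCColoring

section Leaves

variable {V : Type*} [Finite V]

theorem bddAbove_leafCounts (G : SimpleGraph V) :
    BddAbove {k | ∃ T : SimpleGraph V, T ≤ G ∧ T.IsTree ∧ leafCount T = k} :=
  ⟨Nat.card V, by rintro _ ⟨T, -, -, rfl⟩; exact Set.ncard_le_card _⟩

theorem leafCount_le_maxLeaves {G T : SimpleGraph V} (hTG : T ≤ G) (hT : T.IsTree) :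
    leafCount T ≤ maxLeaves G :=
  le_csSup (bddAbove_leafCounts G) ⟨T, hTG, hT, rfl⟩

theorem exists_leafCount_eq_maxLeaves {G : SimpleGraph V} (hG : G.Connected) :
    ∃ T ≤ G, T.IsTree ∧ leafCount T = maxLeaves G := by
  obtain ⟨T, hTG, hT⟩ := hG.exists_isTree_le
  exact Nat.sSup_mem (s := {k | ∃ T : SimpleGraph V, T ≤ G ∧ T.IsTree ∧ leafCount T = k})
    ⟨_, T, hTG, hT, rfl⟩ (bddAbove_leafCounts G)

end Leaves

theorem two_mul_add_mul_add_three_lt_sq {n m Δ : ℕ} (hn : 3 < n)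
    (h : (Δ : ℚ) < n - (2 * m - 3 * (n - 1)) / (n - 3)) :
    2 * m + Δ * (n - 3) + 3 < n ^ 2 := by
  have hn' : (3 : ℚ) < n := by exact_mod_cast hn
  rw [lt_sub_iff_add_lt, ← lt_sub_iff_add_lt', div_lt_iff₀ (by linarith)] at h
  have : ((2 * m + Δ * (n - 3) + 3 : ℕ) : ℚ) < ((n ^ 2 : ℕ) : ℚ) := by
    push_cast [Nat.cast_sub hn.le]
    nlinarith
  exact_mod_cast this

section Bound

variable {V : Type*} [Fintype V] [DecidableEq V] {G : SimpleGraph V} [DecidableRel G.Adj]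

theorem exists_ne_not_adj_of_two_mul_add_mul_add_three_lt_sq
    (hdeg : 2 * #G.edgeFinset + G.maxDegree * (Fintype.card V - 3) + 3 < Fintype.card V ^ 2) :
    ∃ u v, u ≠ v ∧ ¬G.Adj u v := by
  by_contra! hall
  have hzero (v : V) : Gᶜ.degree v = 0 := by
    rw [← card_neighborFinset_eq_degree, card_eq_zero, eq_empty_iff_forall_notMem]
    intro u hu
    rw [mem_neighborFinset, compl_adj] at hu
    exact hu.2 (hall v u hu.1)
  have hid := G.sum_degree_compl_add_two_mul_card_edgeFinset
  simp only [hzero, sum_const_zero, zero_add] at hid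
  obtain ⟨v⟩ : Nonempty V :=
    Fintype.card_pos_iff.1 (Nat.pos_of_ne_zero fun h0 => by simp [h0] at hdeg)
  have hv := G.degree_add_degree_compl v
  have hΔ := G.degree_le_maxDegree v
  rw [hzero] at hv
  generalize Fintype.card V = n at *
  rcases Nat.lt_or_ge n 3 with hn | hn
  · rw [Nat.sub_eq_zero_of_le hn.le] at hdeg
    interval_cases n <;> omega
  · obtain ⟨p, rfl⟩ : ∃ p, n = p + 3 := ⟨_, (Nat.sub_add_cancel hn).symm⟩
    rw [Nat.add_sub_cancel] at hdeg
    rw [show p + 3 - 1 = p + 2 by omega] at hid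
    nlinarith [Nat.mul_le_mul_right p (show p + 2 ≤ G.maxDegree by omega)]

theorem IsTMCColoring.totalColorsUsed_add_card_le {vcol : V → ℕ} {ecol : Sym2 V → ℕ}
    (h : IsTMCColoring G vcol ecol)
    (hdeg : 2 * #G.edgeFinset + G.maxDegree * (Fintype.card V - 3) + 3 < Fintype.card V ^ 2) :
    totalColorsUsed G vcol ecol + Fintype.card V ≤ #G.edgeFinset + 2 + maxLeaves G := by
  obtain ⟨T, hTG, hT, hleaf⟩ :=
    h.exists_isTree_le_ncard_diff_le_leafCount
      (exists_ne_not_adj_of_two_mul_add_mul_add_three_lt_sq hdeg)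
  have hcore := h.isMCColoring.card_image_add_card_le hdeg
  have hL := leafCount_le_maxLeaves hTG hT
  have hA : (ecol '' G.edgeSet).ncard = #(G.edgeFinset.image ecol) := by
    rw [← Set.ncard_coe_finset, coe_image, coe_edgeFinset]
  have hU : totalColorsUsed G vcol ecol ≤
      (ecol '' G.edgeSet).ncard + (Set.range vcol \ ecol '' G.edgeSet).ncard := by
    rw [totalColorsUsed, Set.union_comm, ← Set.union_sdiff_self]
    exact Set.ncard_union_le _ _
  omega

end Bound

/-- If `G` is a connected graph of order `n > 3` with
`Δ(G) < n - (2m - 3(n-1))/(n-3)`, then `tmc(G) = m - n + 2 + l(G)`. -/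
theorem stmt_10 {V : Type*} [Fintype V] [DecidableEq V] (G : SimpleGraph V)
    [DecidableRel G.Adj] (hn : 3 < Fintype.card V) (hG : G.Connected)
    (hdeg : (G.maxDegree : ℚ) < (Fintype.card V : ℚ) -
      (2 * (G.edgeSet.ncard : ℚ) - 3 * ((Fintype.card V : ℚ) - 1)) /
        ((Fintype.card V : ℚ) - 3)) :
    (tmc G : ℤ) = (G.edgeSet.ncard : ℤ) - Fintype.card V + 2 + maxLeaves G := by
  have hm : G.edgeSet.ncard = #G.edgeFinset := by rw [← coe_edgeFinset, Set.ncard_coe_finset]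
  have hdeg' := two_mul_add_mul_add_three_lt_sq hn hdeg
  rw [hm] at hdeg'
  have : Nontrivial V := Fintype.one_lt_card_iff_nontrivial.1 (by omega)
  obtain ⟨T, hTG, hT, hTL⟩ := exists_leafCount_eq_maxLeaves hG
  obtain ⟨vcol, ecol, hcol, hcount⟩ := exists_isTMCColoring_le_totalColorsUsed hTG hT
  have hTe : T.edgeSet.ncard + 1 = Fintype.card V := by
    rw [← Nat.card_coe_set_eq, ← Nat.card_eq_fintype_card]
    exact (isTree_iff_connected_and_card.1 hT).2
  have hN := Set.ncard_sdiff (edgeSet_mono hTG)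
  have hTG' := Set.ncard_le_ncard (edgeSet_mono hTG)
  have htmc : tmc G = G.edgeSet.ncard + 2 + maxLeaves G - Fintype.card V := by
    refine IsGreatest.csSup_eq ⟨⟨vcol, ecol, hcol, ?_⟩, ?_⟩
    · have := hcol.totalColorsUsed_add_card_le hdeg'
      omega
    · rintro _ ⟨vcol, ecol, h, rfl⟩
      have := h.totalColorsUsed_add_card_le hdeg'
      omega
  omega
end
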